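/- arXiv:1910.01890 — 6 statements merged into one kernel-verified Lean document; each statement's English description precedes it below -/
import Mathlib

section
/- Let μ_0 > 0, let μ : [0,∞) → ℝ be continuous with μ(a) ≥ μ_0 for all a ≥ 0, let λ > −μ_0 be real, c ∈ ℝ, and let ψ : [0,∞) → ℝ be continuous and integrable. Define φ(a) = c·exp(−∫_0^a (μ(s)+λ) ds) + ∫_0^a exp(−∫_s^a (μ(ξ)+λ) dξ)·ψ(s) ds. Then φ is continuously differentiable with φ(0) = c and φ'(a) + (μ(a)+λ)·φ(a) = ψ(a) for all a ≥ 0; moreover φ is integrable on [0,∞) with ∫_0^∞ |φ(a)| da ≤ (|c| + ∫_0^∞ |ψ(s)| ds)/(λ + μ_0). -/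
open MeasureTheory Real Set

/-! Writing `M a = ∫_0^a m`, the profile is `exp (-M a) * (c + ∫_0^a exp (M s) * f s)`, which solves
`φ' = f - m φ` with `φ 0 = c` (variation of constants). If `m ≥ k > 0` on `[0, ∞)`, then `|φ|` is
dominated by the profile `D` with constant rate `k` and data `|c|`, `|f|`. Integrating
`D' = |f| - k D` over `[0, T]` gives `k ∫_0^T D = |c| - D T + ∫_0^T |f| ≤ |c| + ∫_0^∞ |f|`, and letting
`T → ∞` yields the integrability and the `L¹` bound. The coefficients are only given on `[0, ∞)`, so
they are first extended to `ℝ` by `x ↦ g (max x 0)`, which changes no value of the profile there. -/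

noncomputable def resolventFun (m : ℝ → ℝ) (c : ℝ) (f : ℝ → ℝ) (a : ℝ) : ℝ :=
  c * exp (-∫ s in (0:ℝ)..a, m s) + ∫ s in (0:ℝ)..a, exp (-∫ ξ in s..a, m ξ) * f s

lemma ContinuousOn.continuous_comp_max {g : ℝ → ℝ} {b : ℝ} (hg : ContinuousOn g (Ici b)) :
    Continuous fun x => g (max x b) :=
  hg.comp_continuous (continuous_id.max continuous_const) fun x => le_max_right x b

lemma intervalIntegral.continuous_integral_left {g : ℝ → ℝ} (hg : Continuous g) (b : ℝ) :
    Continuous fun a => ∫ x in a..b, g x := by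
  simp_rw [intervalIntegral.integral_symm b]
  exact (intervalIntegral.continuous_primitive (hg.intervalIntegrable) b).neg

lemma mul_integral_eq_of_hasDerivAt {D g : ℝ → ℝ} {k a b : ℝ}
    (hD : ∀ x, HasDerivAt D (g x - k * D x) x) (hg : IntervalIntegrable g volume a b) :
    k * ∫ x in a..b, D x = D a - D b + ∫ x in a..b, g x := by
  have hDc : Continuous D := continuous_iff_continuousAt.2 fun x => (hD x).continuousAt
  have hkD : IntervalIntegrable (fun x => k * D x) volume a b :=
    (continuous_const.mul hDc).intervalIntegrable a b
  have hftc := intervalIntegral.integral_eq_sub_of_hasDerivAt (fun x _ => hD x) (hg.sub hkD)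
  rw [intervalIntegral.integral_sub hg hkD, intervalIntegral.integral_const_mul] at hftc
  linarith

lemma ContinuousOn.integrableOn_Ici_of_intervalIntegral_abs_le {g : ℝ → ℝ} {a C : ℝ}
    (hg : ContinuousOn g (Ici a)) (h : ∀ T, a ≤ T → ∫ x in a..T, |g x| ≤ C) :
    IntegrableOn g (Ici a) ∧ ∫ x in Ici a, |g x| ≤ C := by
  have hIoi : IntegrableOn g (Ioi a) :=
    integrableOn_Ioi_of_intervalIntegral_norm_bounded C a
      (fun T => (hg.mono Icc_subset_Ici_self).integrableOn_Icc.mono_set Ioc_subset_Icc_self)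
      Filter.tendsto_id
      (Filter.eventually_ge_atTop a |>.mono h)
  refine ⟨by rwa [integrableOn_Ici_iff_integrableOn_Ioi], ?_⟩
  rw [integral_Ici_eq_integral_Ioi]
  exact le_of_tendsto (intervalIntegral_tendsto_integral_Ioi a hIoi.abs Filter.tendsto_id)
    (Filter.eventually_ge_atTop a |>.mono h)

lemma intervalIntegral_abs_comp_max_le {g : ℝ → ℝ} {b T : ℝ} (hg : IntegrableOn g (Ici b))
    (hT : b ≤ T) : ∫ x in b..T, |g (max x b)| ≤ ∫ x in Ici b, |g x| := by
  rw [intervalIntegral.integral_of_le hT, setIntegral_congr_fun measurableSet_Ioc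
    fun x (hx : x ∈ Ioc b T) => show |g (max x b)| = |g x| by rw [max_eq_left hx.1.le]]
  exact setIntegral_mono_set hg.abs (.of_forall fun _ => abs_nonneg _)
    (Ioc_subset_Icc_self.trans Icc_subset_Ici_self).eventuallyLE

namespace resolventFun

variable {m f m' f' : ℝ → ℝ} {c k a : ℝ}

@[simp]
lemma zero : resolventFun m c f 0 = c := by
  simp [resolventFun]

lemma congr (ha : 0 ≤ a) (hm : EqOn m m' (Icc 0 a)) (hf : EqOn f f' (Icc 0 a)) :
    resolventFun m c f a = resolventFun m' c f' a := by
  have hint : ∀ s ∈ Icc 0 a, ∫ ξ in s..a, m ξ = ∫ ξ in s..a, m' ξ := fun s hs =>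
    intervalIntegral.integral_congr fun ξ hξ =>
      hm ⟨hs.1.trans (uIcc_of_le hs.2 ▸ hξ).1, (uIcc_of_le hs.2 ▸ hξ).2⟩
  unfold resolventFun
  rw [hint 0 ⟨le_rfl, ha⟩]
  congr 1
  exact intervalIntegral.integral_congr fun s hs => by
    rw [uIcc_of_le ha] at hs
    rw [hint s hs, hf hs]

lemma nonneg (hc : 0 ≤ c) (hf : ∀ s, 0 ≤ f s) (ha : 0 ≤ a) : 0 ≤ resolventFun m c f a :=
  add_nonneg (mul_nonneg hc (exp_pos _).le)
    (intervalIntegral.integral_nonneg ha fun s _ => mul_nonneg (exp_pos _).le (hf s))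

lemma eq_exp_mul (hm : Continuous m) :
    resolventFun m c f a = exp (-∫ s in (0:ℝ)..a, m s) *
      (c + ∫ s in (0:ℝ)..a, exp (∫ ξ in (0:ℝ)..s, m ξ) * f s) := by
  have hsplit : ∀ s, exp (-∫ ξ in s..a, m ξ) * f s =
      exp (-∫ ξ in (0:ℝ)..a, m ξ) * (exp (∫ ξ in (0:ℝ)..s, m ξ) * f s) := fun s => by
    rw [← intervalIntegral.integral_interval_sub_left (hm.intervalIntegrable 0 a)
      (hm.intervalIntegrable 0 s), neg_sub, sub_eq_neg_add, exp_add, mul_assoc]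
  simp_rw [resolventFun, hsplit, intervalIntegral.integral_const_mul]
  ring

lemma hasDerivAt (hm : Continuous m) (hf : Continuous f) (a : ℝ) :
    HasDerivAt (resolventFun m c f) (f a - m a * resolventFun m c f a) a := by
  set M : ℝ → ℝ := fun a => ∫ s in (0:ℝ)..a, m s
  have hM : ∀ x, HasDerivAt M (m x) x := fun x => (hm.integral_hasStrictDerivAt 0 x).hasDerivAt
  have hMc : Continuous M := continuous_iff_continuousAt.2 fun x => (hM x).continuousAt
  have hG : HasDerivAt (fun a => c + ∫ s in (0:ℝ)..a, exp (M s) * f s) (exp (M a) * f a) a :=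
    (((continuous_exp.comp hMc).mul hf).integral_hasStrictDerivAt 0 a).hasDerivAt.const_add c
  have hE : HasDerivAt (fun x => exp (-M x)) (exp (-M a) * -m a) a := (hM a).neg.exp
  have hΦ : resolventFun m c f =
      fun x => exp (-M x) * (c + ∫ s in (0:ℝ)..x, exp (M s) * f s) :=
    funext fun x => eq_exp_mul hm
  rw [hΦ]
  refine (hE.mul hG).congr_deriv ?_
  have hcancel : exp (-M a) * exp (M a) = 1 := by rw [← exp_add, neg_add_cancel, exp_zero]
  linear_combination f a * hcancel

lemma continuous (hm : Continuous m) (hf : Continuous f) : Continuous (resolventFun m c f) :=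
  continuous_iff_continuousAt.2 fun a => (hasDerivAt (c := c) hm hf a).continuousAt

lemma abs_le (hm : Continuous m) (hf : Continuous f) (hmk : ∀ s, 0 ≤ s → k ≤ m s)
    (ha : 0 ≤ a) :
    |resolventFun m c f a| ≤ resolventFun (fun _ => k) |c| (fun s => |f s|) a := by
  have hexp : ∀ s ∈ Icc 0 a, exp (-∫ ξ in s..a, m ξ) ≤ exp (-∫ _ in s..a, k) := fun s hs =>
    exp_le_exp.2 <| neg_le_neg <| intervalIntegral.integral_mono_on hs.2
      intervalIntegrable_const (hm.intervalIntegrable s a) fun ξ hξ => hmk ξ (hs.1.trans hξ.1)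
  have hcont : ∀ r : ℝ → ℝ, Continuous r → Continuous fun s => exp (-∫ ξ in s..a, r ξ) * |f s| :=
    fun r hr => (continuous_exp.comp (intervalIntegral.continuous_integral_left hr a).neg).mul
      hf.abs
  calc |resolventFun m c f a|
      ≤ |c| * exp (-∫ s in (0:ℝ)..a, m s) + ∫ s in (0:ℝ)..a, exp (-∫ ξ in s..a, m ξ) * |f s| := by
        refine (abs_add_le _ _).trans (add_le_add (by rw [abs_mul, abs_exp]) ?_)
        refine (intervalIntegral.abs_integral_le_integral_abs ha).trans_eq ?_
        simp_rw [abs_mul, abs_exp]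
    _ ≤ resolventFun (fun _ => k) |c| (fun s => |f s|) a := by
        refine add_le_add (mul_le_mul_of_nonneg_left (hexp 0 ⟨le_rfl, ha⟩) (abs_nonneg c)) ?_
        refine intervalIntegral.integral_mono_on ha ((hcont m hm).intervalIntegrable 0 a)
          ((hcont _ continuous_const).intervalIntegrable 0 a) fun s hs => ?_
        exact mul_le_mul_of_nonneg_right (hexp s hs) (abs_nonneg _)

lemma integral_abs_le (hm : Continuous m) (hf : Continuous f) (hk : 0 < k)
    (hmk : ∀ s, 0 ≤ s → k ≤ m s) {T : ℝ} (hT : 0 ≤ T) :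
    ∫ a in (0:ℝ)..T, |resolventFun m c f a| ≤ (|c| + ∫ a in (0:ℝ)..T, |f a|) / k := by
  set D := resolventFun (fun _ => k) |c| (fun s => |f s|)
  have hD : k * ∫ a in (0:ℝ)..T, D a = |c| - D T + ∫ a in (0:ℝ)..T, |f a| := by
    rw [mul_integral_eq_of_hasDerivAt (fun x => hasDerivAt continuous_const hf.abs x)
      (hf.abs.intervalIntegrable 0 T), zero]
  have hDT : 0 ≤ D T := nonneg (abs_nonneg c) (fun s => abs_nonneg (f s)) hT
  have hle : ∫ a in (0:ℝ)..T, |resolventFun m c f a| ≤ ∫ a in (0:ℝ)..T, D a :=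
    intervalIntegral.integral_mono_on hT ((continuous hm hf).abs.intervalIntegrable 0 T)
      ((continuous continuous_const hf.abs).intervalIntegrable 0 T)
      fun a ha => abs_le hm hf hmk ha.1
  rw [le_div_iff₀ hk]
  calc (∫ a in (0:ℝ)..T, |resolventFun m c f a|) * k ≤ k * ∫ a in (0:ℝ)..T, D a := by
        rw [mul_comm]; exact mul_le_mul_of_nonneg_left hle hk.le
    _ ≤ |c| + ∫ a in (0:ℝ)..T, |f a| := by linarith

end resolventFun

theorem resolvent_formula_general (μ0 l c : ℝ) (hl : -μ0 < l)
    (μ ψ : ℝ → ℝ)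
    (hμc : ContinuousOn μ (Ici 0)) (hμb : ∀ a, 0 ≤ a → μ0 ≤ μ a)
    (hψc : ContinuousOn ψ (Ici 0)) (hψint : IntegrableOn ψ (Ici 0))
    (φ : ℝ → ℝ)
    (hφ : ∀ a, φ a = c * Real.exp (-(∫ s in (0:ℝ)..a, (μ s + l))) +
        ∫ s in (0:ℝ)..a, Real.exp (-(∫ ξ in s..a, (μ ξ + l))) * ψ s) :
    φ 0 = c ∧
    (∀ a ∈ Ici (0:ℝ), HasDerivWithinAt φ (ψ a - (μ a + l) * φ a) (Ici 0) a) ∧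
    ContinuousOn (fun a => ψ a - (μ a + l) * φ a) (Ici 0) ∧
    IntegrableOn φ (Ici 0) ∧
    (∫ a in Ici (0:ℝ), |φ a|) ≤ (|c| + ∫ s in Ici (0:ℝ), |ψ s|) / (l + μ0) := by
  have hk : 0 < l + μ0 := by linarith
  set m : ℝ → ℝ := fun a => μ (max a 0) + l
  set f : ℝ → ℝ := fun a => ψ (max a 0)
  have hm : Continuous m := hμc.continuous_comp_max.add continuous_const
  have hf : Continuous f := hψc.continuous_comp_max
  have hmk : ∀ s, 0 ≤ s → l + μ0 ≤ m s := fun s hs => by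
    simp only [m, max_eq_left hs]; linarith [hμb s hs]
  have hφΦ : EqOn φ (resolventFun m c f) (Ici 0) := fun a (ha : 0 ≤ a) =>
    (hφ a).trans <| resolventFun.congr ha (fun s hs => by simp [m, max_eq_left hs.1])
      (fun s hs => by simp [f, max_eq_left hs.1])
  have hφc : ContinuousOn φ (Ici 0) := (resolventFun.continuous hm hf).continuousOn.congr hφΦ
  have hbound : ∀ T, 0 ≤ T →
      ∫ a in (0:ℝ)..T, |φ a| ≤ (|c| + ∫ s in Ici (0:ℝ), |ψ s|) / (l + μ0) := fun T hT => by
    rw [intervalIntegral.integral_congr fun a ha =>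
      congrArg abs (hφΦ (Icc_subset_Ici_self (uIcc_of_le hT ▸ ha)))]
    exact (resolventFun.integral_abs_le hm hf hk hmk hT).trans
      (by gcongr; exact intervalIntegral_abs_comp_max_le hψint hT)
  obtain ⟨hint, hL1⟩ := hφc.integrableOn_Ici_of_intervalIntegral_abs_le hbound
  refine ⟨by simp [hφ 0], fun a (ha : 0 ≤ a) => ?_, hψc.sub ((hμc.add continuousOn_const).mul hφc),
    hint, hL1⟩
  have hd := (resolventFun.hasDerivAt (c := c) hm hf a).hasDerivWithinAt (s := Ici 0)
  simp only [m, f, max_eq_left ha, ← hφΦ ha] at hd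
  exact hd.congr hφΦ (hφΦ ha)

/-- **Explicit resolvent formula for the age-structured generator.**
For `λ > -μ₀`, the function
`φ a = c·exp(-∫_0^a (μ+λ)) + ∫_0^a exp(-∫_s^a (μ+λ)) ψ(s) ds`
is continuously differentiable on `[0,∞)` with `φ 0 = c`,
`φ' a + (μ a + λ) φ a = ψ a`, and it is integrable with
`∫_0^∞ |φ| ≤ (|c| + ∫_0^∞ |ψ|)/(λ + μ₀)`. -/
theorem resolvent_formula (μ0 l c : ℝ) (hμ0 : 0 < μ0) (hl : -μ0 < l)
    (μ ψ : ℝ → ℝ)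
    (hμc : ContinuousOn μ (Ici 0)) (hμb : ∀ a, 0 ≤ a → μ0 ≤ μ a)
    (hψc : ContinuousOn ψ (Ici 0)) (hψint : IntegrableOn ψ (Ici 0))
    (φ : ℝ → ℝ)
    (hφ : ∀ a, φ a = c * Real.exp (-(∫ s in (0:ℝ)..a, (μ s + l))) +
        ∫ s in (0:ℝ)..a, Real.exp (-(∫ ξ in s..a, (μ ξ + l))) * ψ s) :
    φ 0 = c ∧
    (∀ a ∈ Ici (0:ℝ), HasDerivWithinAt φ (ψ a - (μ a + l) * φ a) (Ici 0) a) ∧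
    ContinuousOn (fun a => ψ a - (μ a + l) * φ a) (Ici 0) ∧
    IntegrableOn φ (Ici 0) ∧
    (∫ a in Ici (0:ℝ), |φ a|) ≤ (|c| + ∫ s in Ici (0:ℝ), |ψ s|) / (l + μ0) :=
  resolvent_formula_general μ0 l c hl μ ψ hμc hμb hψc hψint φ hφ
end

section
/- Let μ_S > 0, R > 1, and let h : [0,∞) → [0,∞) be measurable with ∫_0^∞ h(a) da = r, where 0 < r < ∞. Then there is no complex number λ with Re λ ≥ 0 such that (λ + μ_S·R)/(λ + μ_S) = (1/r)·∫_0^∞ h(a)·exp(−λa) da. -/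
open MeasureTheory Real Set

/-!
On the closed right half-plane `|e^{-λa}| ≤ 1` for `a ≥ 0`, so the right-hand side has modulus
at most `(1/r) ∫ h = 1`. On the left, `λ + μ_S R` lies strictly farther from the origin than
`λ + μ_S`, because both points share the imaginary part of `λ` while their real parts satisfy
`0 < Re λ + μ_S < Re λ + μ_S R`; so the left-hand side has modulus greater than `1`.
-/

namespace Complex

theorem norm_exp_neg_mul_ofReal_le_one {l : ℂ} (hl : 0 ≤ l.re) {a : ℝ} (ha : 0 ≤ a) :
    ‖exp (-l * a)‖ ≤ 1 := by
  rw [norm_exp, Real.exp_le_one_iff]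
  simpa using mul_nonneg hl ha

theorem norm_add_ofReal_lt_norm_add_ofReal {l : ℂ} {a b : ℝ} (ha : 0 ≤ l.re + a) (hab : a < b) :
    ‖l + a‖ < ‖l + b‖ := by
  have hsq : normSq (l + a) < normSq (l + b) := by
    simp only [normSq_apply, add_re, add_im, ofReal_re, ofReal_im, add_zero]
    nlinarith
  rw [norm_def, norm_def]
  exact Real.sqrt_lt_sqrt (normSq_nonneg _) hsq

theorem one_lt_norm_add_ofReal_div_add_ofReal {l : ℂ} {a b : ℝ} (ha : 0 < l.re + a)
    (hab : a < b) : 1 < ‖(l + b) / (l + a)‖ := by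
  have hpos : 0 < ‖l + a‖ := (abs_pos_of_pos (by simpa using ha)).trans_le (abs_re_le_norm _)
  rw [norm_div, one_lt_div hpos]
  exact norm_add_ofReal_lt_norm_add_ofReal ha.le hab

end Complex

theorem norm_setIntegral_Ici_mul_exp_neg_le {h : ℝ → ℝ} (hnn : ∀ a, 0 ≤ h a)
    (hint : IntegrableOn h (Ici 0)) {l : ℂ} (hl : 0 ≤ l.re) :
    ‖∫ a in Ici (0:ℝ), (h a : ℂ) * Complex.exp (-l * a)‖ ≤ ∫ a in Ici (0:ℝ), h a := by
  refine norm_integral_le_of_norm_le hint ?_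
  filter_upwards [ae_restrict_mem measurableSet_Ici] with a ha
  rw [norm_mul, Complex.norm_real, Real.norm_of_nonneg (hnn a)]
  exact mul_le_of_le_one_right (hnn a) (Complex.norm_exp_neg_mul_ofReal_le_one hl ha)

theorem no_characteristic_root_endemic_general (μS R r : ℝ)
    (hμS : 0 < μS) (hR : 1 < R) (hr : 0 < r)
    (h : ℝ → ℝ) (hnn : ∀ a, 0 ≤ h a)
    (hint : IntegrableOn h (Ici 0))
    (hsum : (∫ a in Ici (0:ℝ), h a) = r) :
    ¬ ∃ l : ℂ, 0 ≤ l.re ∧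
      (l + (μS : ℂ) * R) / (l + μS) =
        (1 / (r : ℂ)) * ∫ a in Ici (0:ℝ), (h a : ℂ) * Complex.exp (-l * a) := by
  rintro ⟨l, hl, heq⟩
  have hLHS : 1 < ‖(l + (μS : ℂ) * R) / (l + μS)‖ := by
    rw [← Complex.ofReal_mul]
    exact Complex.one_lt_norm_add_ofReal_div_add_ofReal (by linarith)
      (lt_mul_of_one_lt_right hμS hR)
  have hRHS : ‖(1 / (r : ℂ)) * ∫ a in Ici (0:ℝ), (h a : ℂ) * Complex.exp (-l * a)‖ ≤ 1 := by
    rw [norm_mul, norm_div, norm_one, Complex.norm_real, Real.norm_of_nonneg hr.le,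
      one_div_mul_eq_div, div_le_one hr, ← hsum]
    exact norm_setIntegral_Ici_mul_exp_neg_le hnn hint hl
  rw [heq] at hLHS
  exact hLHS.not_ge hRHS

/-- **No characteristic root with nonnegative real part at the endemic
equilibrium `E₁`.** If `μ_S > 0`, `R > 1` and `∫_0^∞ h = r > 0`, then no
complex `λ` with `Re λ ≥ 0` satisfies
`(λ + μ_S R)/(λ + μ_S) = (1/r) ∫_0^∞ h(a) e^{-λ a} da`. -/
theorem no_characteristic_root_endemic (μS R r : ℝ)
    (hμS : 0 < μS) (hR : 1 < R) (hr : 0 < r)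
    (h : ℝ → ℝ) (hmeas : Measurable h) (hnn : ∀ a, 0 ≤ h a)
    (hint : IntegrableOn h (Ici 0))
    (hsum : (∫ a in Ici (0:ℝ), h a) = r) :
    ¬ ∃ l : ℂ, 0 ≤ l.re ∧
      (l + (μS : ℂ) * R) / (l + μS) =
        (1 / (r : ℂ)) * ∫ a in Ici (0:ℝ), (h a : ℂ) * Complex.exp (-l * a) :=
  no_characteristic_root_endemic_general μS R r hμS hR hr h hnn hint hsum
end

section
/- Assume the two-strain SI model hypotheses. If max{R_0^x, R_0^y} ≤ 1, then the only equilibrium of the two-strain SI system is E_0 = (Λ/μ_S, 0, 0). -/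
/-!
An equilibrium profile solves `x' = -μₓ x`, so `x = x(0) πₓ` and the renewal condition reads
`x(0) = S x(0) rₓ`. If `x(0) ≠ 0` this forces `S rₓ = 1`, and then the balance law gives
`Λ rₓ ≥ (μ_S S + x(0)) rₓ = μ_S + x(0) rₓ > μ_S`, i.e. `R₀ˣ > 1`. Hence both strains vanish and the
balance law leaves `S = Λ / μ_S`.
-/

open MeasureTheory Real Set

/-- Survival probability `π(a) = exp(-∫_0^a μ)`. -/
noncomputable def survival (μ : ℝ → ℝ) (a : ℝ) : ℝ :=
  Real.exp (-(∫ s in (0:ℝ)..a, μ s))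

/-- An equilibrium of the two-strain infection-age structured SI system:
`S ≥ 0`, `x, y ≥ 0` are continuously differentiable on `[0,∞)` with
`x' = -μₓ x`, `y' = -μ_y y`, renewal boundary conditions
`x 0 = S ∫ βₓ x`, `y 0 = S ∫ β_y y`, and the balance `Λ = μ_S S + x 0 + y 0`. -/
def IsEquilibrium (Λ μS : ℝ) (μx μy βx βy : ℝ → ℝ)
    (S : ℝ) (x y : ℝ → ℝ) : Prop :=
  0 ≤ S ∧ (∀ a, 0 ≤ a → 0 ≤ x a) ∧ (∀ a, 0 ≤ a → 0 ≤ y a) ∧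
  (∀ a, 0 ≤ a → HasDerivWithinAt x (-(μx a) * x a) (Ici 0) a) ∧
  (∀ a, 0 ≤ a → HasDerivWithinAt y (-(μy a) * y a) (Ici 0) a) ∧
  x 0 = S * ∫ a in Ici (0:ℝ), βx a * x a ∧
  y 0 = S * ∫ a in Ici (0:ℝ), βy a * y a ∧
  Λ = μS * S + x 0 + y 0

section LinearODE

variable {μ x : ℝ → ℝ}

theorem hasDerivWithinAt_primitive_Ici (hμ : ContinuousOn μ (Ici 0)) {a : ℝ} (ha : 0 ≤ a) :
    HasDerivWithinAt (fun t => ∫ s in (0 : ℝ)..t, μ s) (μ a) (Ici 0) a := by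
  have hint : IntervalIntegrable μ volume 0 a :=
    (hμ.mono (by simpa [uIcc_of_le ha] using Icc_subset_Ici_self)).intervalIntegrable
  rcases ha.eq_or_lt with rfl | ha
  · exact intervalIntegral.integral_hasDerivWithinAt_right hint
      ((hμ.stronglyMeasurableAtFilter_nhdsWithin measurableSet_Ici 0).filter_mono
        (nhdsWithin_mono _ Ioi_subset_Ici_self))
      ((hμ 0 self_mem_Ici).mono Ioi_subset_Ici_self)
  · exact (intervalIntegral.integral_hasDerivAt_right hint
      ((hμ.mono Ioi_subset_Ici_self).stronglyMeasurableAtFilter isOpen_Ioi a ha)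
      ((hμ.mono Ioi_subset_Ici_self).continuousAt (Ioi_mem_nhds ha))).hasDerivWithinAt

theorem survival_pos (μ : ℝ → ℝ) (a : ℝ) : 0 < survival μ a := exp_pos _

theorem hasDerivWithinAt_survival (hμ : ContinuousOn μ (Ici 0)) {a : ℝ} (ha : 0 ≤ a) :
    HasDerivWithinAt (survival μ) (-(μ a) * survival μ a) (Ici 0) a :=
  (hasDerivWithinAt_primitive_Ici hμ ha).neg.exp.congr_deriv (mul_comm _ _)

theorem eq_mul_survival_of_hasDerivWithinAt (hμ : ContinuousOn μ (Ici 0))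
    (hx : ∀ a, 0 ≤ a → HasDerivWithinAt x (-(μ a) * x a) (Ici 0) a) {a : ℝ} (ha : 0 ≤ a) :
    x a = x 0 * survival μ a := by
  have hquot : ∀ t, 0 ≤ t → HasDerivWithinAt (fun t => x t / survival μ t) 0 (Ici 0) t := by
    intro t ht
    exact ((hx t ht).div (hasDerivWithinAt_survival hμ ht) (survival_pos μ t).ne').congr_deriv
      (by ring)
  have hconst := constant_of_has_deriv_right_zero (a := 0) (b := a)
    (fun t ht => (hquot t ht.1).continuousWithinAt.mono Icc_subset_Ici_self)
    (fun t ht => (hquot t ht.1).mono (Ici_subset_Ici.2 ht.1)) a ⟨ha, le_rfl⟩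
  have hsurv₀ : survival μ 0 = 1 := by simp [survival]
  rwa [hsurv₀, div_one, div_eq_iff (survival_pos μ a).ne'] at hconst

end LinearODE

theorem setIntegral_mul_eq_of_eq_mul_survival {μ β x : ℝ → ℝ}
    (hx : ∀ a, 0 ≤ a → x a = x 0 * survival μ a) :
    ∫ a in Ici (0 : ℝ), β a * x a = x 0 * ∫ a in Ici (0 : ℝ), β a * survival μ a := by
  rw [← integral_const_mul]
  refine setIntegral_congr_fun measurableSet_Ici fun a ha => ?_
  rw [hx a ha]
  ring

theorem eq_zero_of_renewal_of_mul_le {Λ μS S x₀ r : ℝ} (hS : 0 ≤ S) (hx₀ : 0 ≤ x₀)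
    (hbal : μS * S + x₀ ≤ Λ) (hrenewal : x₀ = S * (x₀ * r)) (hR : Λ * r ≤ μS) : x₀ = 0 := by
  by_contra hne
  have hSr : S * r = 1 := by
    apply mul_left_cancel₀ hne
    linear_combination -hrenewal
  have hr : 0 < r := by
    rcases hS.eq_or_lt with rfl | hS
    · simp at hSr
    · exact pos_of_mul_pos_right (hSr ▸ one_pos) hS.le
  have hx₀r : 0 < x₀ * r := mul_pos (hx₀.lt_of_ne' hne) hr
  have hμSSr : μS * S * r = μS := by rw [mul_assoc, hSr, mul_one]
  nlinarith [mul_le_mul_of_nonneg_right hbal hr.le]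

section Equilibria

variable {Λ μS : ℝ} {μx μy βx βy : ℝ → ℝ}

theorem isEquilibrium_diseaseFree (hΛ : 0 ≤ Λ) (hμS : 0 < μS) :
    IsEquilibrium Λ μS μx μy βx βy (Λ / μS) (fun _ => 0) (fun _ => 0) := by
  have hconst : ∀ a, HasDerivWithinAt (fun _ : ℝ => (0 : ℝ)) 0 (Ici 0) a :=
    fun a => hasDerivWithinAt_const a _ 0
  refine ⟨div_nonneg hΛ hμS.le, fun _ _ => le_rfl, fun _ _ => le_rfl, fun a _ => ?_, fun a _ => ?_,
    by simp, by simp, by field_simp; ring⟩ <;> simpa using hconst a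

theorem IsEquilibrium.eq_diseaseFree {S : ℝ} {x y : ℝ → ℝ}
    (he : IsEquilibrium Λ μS μx μy βx βy S x y) (hμS : 0 < μS)
    (hμx : ContinuousOn μx (Ici 0)) (hμy : ContinuousOn μy (Ici 0))
    (hRx : Λ * ∫ a in Ici (0 : ℝ), βx a * survival μx a ≤ μS)
    (hRy : Λ * ∫ a in Ici (0 : ℝ), βy a * survival μy a ≤ μS) :
    S = Λ / μS ∧ (∀ a, 0 ≤ a → x a = 0) ∧ (∀ a, 0 ≤ a → y a = 0) := by
  obtain ⟨hS, hx, hy, hx', hy', hxren, hyren, hbal⟩ := he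
  have hxsol := fun a => eq_mul_survival_of_hasDerivWithinAt hμx hx' (a := a)
  have hysol := fun a => eq_mul_survival_of_hasDerivWithinAt hμy hy' (a := a)
  rw [setIntegral_mul_eq_of_eq_mul_survival hxsol] at hxren
  rw [setIntegral_mul_eq_of_eq_mul_survival hysol] at hyren
  have hx₀ : x 0 = 0 := eq_zero_of_renewal_of_mul_le hS (hx 0 le_rfl)
    (by linarith [hy 0 le_rfl]) hxren hRx
  have hy₀ : y 0 = 0 := eq_zero_of_renewal_of_mul_le hS (hy 0 le_rfl)
    (by linarith [hx 0 le_rfl]) hyren hRy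
  refine ⟨?_, fun a ha => by rw [hxsol a ha, hx₀, zero_mul],
    fun a ha => by rw [hysol a ha, hy₀, zero_mul]⟩
  rw [eq_div_iff hμS.ne']
  linarith

end Equilibria

theorem equilibria_disease_free_only_general (Λ μS : ℝ) (μx μy βx βy : ℝ → ℝ)
    (hΛ : 0 < Λ) (hμS : 0 < μS)
    (hμxc : ContinuousOn μx (Ici 0)) (hμyc : ContinuousOn μy (Ici 0))
    (rx ry : ℝ)
    (hrx : rx = ∫ a in Ici (0:ℝ), βx a * survival μx a)
    (hry : ry = ∫ a in Ici (0:ℝ), βy a * survival μy a)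
    (R0x R0y : ℝ) (hR0x : R0x = Λ * rx / μS) (hR0y : R0y = Λ * ry / μS)
    (hR : max R0x R0y ≤ 1) :
    IsEquilibrium Λ μS μx μy βx βy (Λ / μS) (fun _ => 0) (fun _ => 0) ∧
    ∀ S x y, IsEquilibrium Λ μS μx μy βx βy S x y →
      S = Λ / μS ∧ (∀ a, 0 ≤ a → x a = 0) ∧ (∀ a, 0 ≤ a → y a = 0) := by
  obtain ⟨hR0x_le, hR0y_le⟩ := max_le_iff.mp hR
  rw [hR0x, div_le_one hμS, hrx] at hR0x_le
  rw [hR0y, div_le_one hμS, hry] at hR0y_le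
  exact ⟨isEquilibrium_diseaseFree hΛ.le hμS,
    fun S x y he => he.eq_diseaseFree hμS hμxc hμyc hR0x_le hR0y_le⟩

/-- **If `max{R₀ˣ, R₀ʸ} ≤ 1` the disease-free equilibrium `E₀` is the only
equilibrium of the two-strain SI system.** -/
theorem equilibria_disease_free_only (Λ μS μ0 : ℝ) (μx μy βx βy : ℝ → ℝ)
    (hΛ : 0 < Λ) (hμS : 0 < μS) (hμ0 : 0 < μ0) (hμSμ0 : μ0 ≤ μS)
    (hμxc : ContinuousOn μx (Ici 0)) (hμyc : ContinuousOn μy (Ici 0))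
    (hμxb : ∀ a, 0 ≤ a → μ0 ≤ μx a) (hμyb : ∀ a, 0 ≤ a → μ0 ≤ μy a)
    (hβxm : Measurable βx) (hβym : Measurable βy)
    (hβxnn : ∀ a, 0 ≤ βx a) (hβynn : ∀ a, 0 ≤ βy a)
    (Mx My : ℝ) (hβxM : ∀ a, βx a ≤ Mx) (hβyM : ∀ a, βy a ≤ My)
    (rx ry : ℝ)
    (hrx : rx = ∫ a in Ici (0:ℝ), βx a * survival μx a)
    (hry : ry = ∫ a in Ici (0:ℝ), βy a * survival μy a)
    (hrxpos : 0 < rx) (hrypos : 0 < ry)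
    (R0x R0y : ℝ) (hR0x : R0x = Λ * rx / μS) (hR0y : R0y = Λ * ry / μS)
    (hR : max R0x R0y ≤ 1) :
    IsEquilibrium Λ μS μx μy βx βy (Λ / μS) (fun _ => 0) (fun _ => 0) ∧
    ∀ S x y, IsEquilibrium Λ μS μx μy βx βy S x y →
      S = Λ / μS ∧ (∀ a, 0 ≤ a → x a = 0) ∧ (∀ a, 0 ≤ a → y a = 0) :=
  equilibria_disease_free_only_general Λ μS μx μy βx βy hΛ hμS hμxc hμyc rx ry hrx hry R0x R0y hR0x
    hR0y hR
end

section
/- Let μ_0 > 0, let μ : [0,∞) → ℝ be continuous with μ(a) ≥ μ_0 for all a, let β : [0,∞) → [0,∞) be continuous and bounded, set π(a) = exp(−∫_0^a μ(s) ds) and r = ∫_0^∞ β(a)π(a) da with 0 < r < ∞, and define Ψ(a) = (1/r)·∫_a^∞ β(s)·exp(−∫_a^s μ(ξ) dξ) ds. Let y : [0,∞) → ℝ be continuously differentiable with both y and y' integrable on [0,∞). Then ∫_0^∞ Ψ(a)·(y'(a) + μ(a)·y(a)) da = (1/r)·∫_0^∞ β(a)·y(a) da − y(0). -/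
/-!
Write `Ψ = R / r` with `R a = ∫_a^∞ β(s) exp(-∫_a^s μ) ds` (`reproductiveValue`). Then `Ψ 0 = 1`,
`Ψ' = μΨ - β/r` and `0 ≤ Ψ ≤ M / (r μ₀)`, so `Ψ (y' + μ y) - (β/r) y = (Ψ y)'`, and integrating
over `[0, ∞)` gives the identity because `Ψ y → 0`. Since `μ` may be unbounded, the integrability
of `μ Ψ y` also has to come from the equation for `Ψ`: integrating `(Ψ v)'` with
`v = √(y² + ε²) ≥ |y|` bounds `∫_0^T μ Ψ |y|` uniformly in `T`.
-/

open MeasureTheory Real Set Filter Topology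

section HalfLine

variable {E : Type*} [NormedAddCommGroup E] {c : ℝ}

lemma uIcc_subset_Ici_of_le {a b : ℝ} (ha : c ≤ a) (hb : c ≤ b) : uIcc a b ⊆ Ici c :=
  fun _ hx => le_trans (le_min ha hb) hx.1

lemma ContinuousOn.intervalIntegrable_of_Ici {f : ℝ → E} (hf : ContinuousOn f (Ici c))
    {a b : ℝ} (ha : c ≤ a) (hb : c ≤ b) : IntervalIntegrable f volume a b :=
  (hf.mono (uIcc_subset_Ici_of_le ha hb)).intervalIntegrable

variable [NormedSpace ℝ E] [CompleteSpace E]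

lemma ContinuousOn.hasDerivWithinAt_integral_Ici {f : ℝ → E} (hf : ContinuousOn f (Ici c))
    {a : ℝ} (ha : c ≤ a) : HasDerivWithinAt (fun u => ∫ x in c..u, f x) (f a) (Ici c) a := by
  have hmeas : AEStronglyMeasurable f (volume.restrict (Ici c)) :=
    hf.aestronglyMeasurable measurableSet_Ici
  have hint := hf.intervalIntegrable_of_Ici le_rfl ha
  rcases ha.eq_or_lt with rfl | hca
  · exact intervalIntegral.integral_hasDerivWithinAt_right hint
      ⟨Ici c, mem_of_superset self_mem_nhdsWithin Ioi_subset_Ici_self, hmeas⟩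
      ((hf _ self_mem_Ici).mono Ioi_subset_Ici_self)
  · have hnhds : Ici c ∈ 𝓝 a := Ici_mem_nhds hca
    exact (intervalIntegral.integral_hasDerivAt_right hint
      ⟨Ici c, hnhds, hmeas⟩
      ((hf a ha).continuousAt hnhds)).hasDerivWithinAt

end HalfLine

lemma abs_le_sqrt_sq_add_sq (x ε : ℝ) : |x| ≤ √(x ^ 2 + ε ^ 2) := by
  rw [← sqrt_sq_eq_abs]
  exact sqrt_le_sqrt (le_add_of_nonneg_right (sq_nonneg ε))

lemma sqrt_sq_add_sq_le_abs_add {ε : ℝ} (x : ℝ) (hε : 0 ≤ ε) : √(x ^ 2 + ε ^ 2) ≤ |x| + ε := by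
  rw [sqrt_le_left (add_nonneg (abs_nonneg x) hε)]
  nlinarith [sq_abs x, abs_nonneg x]

lemma abs_mul_div_sqrt_sq_add_sq_le (x x' ε : ℝ) : |x * x' / √(x ^ 2 + ε ^ 2)| ≤ |x'| := by
  rw [abs_div, abs_mul, abs_of_nonneg (sqrt_nonneg _)]
  refine div_le_of_le_mul₀ (sqrt_nonneg _) (abs_nonneg _) ?_
  rw [mul_comm]
  exact mul_le_mul_of_nonneg_left (abs_le_sqrt_sq_add_sq x ε) (abs_nonneg _)

lemma HasDerivWithinAt.sqrt_sq_add_sq {y : ℝ → ℝ} {y' ε a : ℝ} {s : Set ℝ}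
    (hy : HasDerivWithinAt y y' s a) (hε : ε ≠ 0) :
    HasDerivWithinAt (fun x => √(y x ^ 2 + ε ^ 2)) (y a * y' / √(y a ^ 2 + ε ^ 2)) s a := by
  have hpos : 0 < y a ^ 2 + ε ^ 2 := by positivity
  convert ((hy.fun_pow 2).add_const (ε ^ 2)).sqrt hpos.ne' using 1
  field_simp
  ring

lemma le_of_forall_pos_le_add_mul {x y z : ℝ} (h : ∀ ε > 0, x ≤ y + ε * z) : x ≤ y := by
  have hcont : Continuous fun ε : ℝ => y + ε * z := by fun_prop
  have hlim : Tendsto (fun ε : ℝ => y + ε * z) (𝓝[>] 0) (𝓝 y) := by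
    simpa using (hcont.tendsto 0).mono_left nhdsWithin_le_nhds
  exact ge_of_tendsto hlim (eventually_nhdsWithin_of_forall h)

section WeightedIntegrationByParts

variable {c B : ℝ} {w g Ψ y y' : ℝ → ℝ}

lemma intervalIntegral_mul_eq_of_hasDerivWithinAt {v v' : ℝ → ℝ}
    (hΨ : ∀ a ∈ Ici c, HasDerivWithinAt Ψ (w a - g a) (Ici c) a)
    (hw : ContinuousOn w (Ici c)) (hg : ContinuousOn g (Ici c))
    (hv : ∀ a ∈ Ici c, HasDerivWithinAt v (v' a) (Ici c) a) (hv' : ContinuousOn v' (Ici c))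
    {T : ℝ} (hT : c ≤ T) :
    ∫ a in c..T, w a * v a = Ψ T * v T - Ψ c * v c + ∫ a in c..T, (g a * v a - Ψ a * v' a) := by
  have hsub : uIcc c T ⊆ Ici c := uIcc_subset_Ici_of_le le_rfl hT
  have ii {f : ℝ → ℝ} (hf : ContinuousOn f (Ici c)) : IntervalIntegrable f volume c T :=
    hf.intervalIntegrable_of_Ici le_rfl hT
  have hΨc : ContinuousOn Ψ (Ici c) := fun a ha => (hΨ a ha).continuousWithinAt
  have hvc : ContinuousOn v (Ici c) := fun a ha => (hv a ha).continuousWithinAt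
  have hparts : ∫ a in c..T, ((w a - g a) * v a + Ψ a * v' a) = Ψ T * v T - Ψ c * v c :=
    intervalIntegral.integral_deriv_mul_eq_sub_of_hasDerivWithinAt
      (fun a ha => (hΨ a (hsub ha)).mono hsub) (fun a ha => (hv a (hsub ha)).mono hsub)
      (ii (hw.sub hg)) (ii hv')
  have hparts_int : IntervalIntegrable (fun a => (w a - g a) * v a + Ψ a * v' a) volume c T :=
    ii (((hw.sub hg).mul hvc).add (hΨc.mul hv'))
  have hrest_int : IntervalIntegrable (fun a => g a * v a - Ψ a * v' a) volume c T :=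
    ii ((hg.mul hvc).sub (hΨc.mul hv'))
  rw [← hparts, ← intervalIntegral.integral_add hparts_int hrest_int]
  congr 1 with a
  ring

lemma intervalIntegral_mul_abs_le_add_mul
    (hΨ : ∀ a ∈ Ici c, HasDerivWithinAt Ψ (w a - g a) (Ici c) a) (hΨB : ∀ a ∈ Ici c, |Ψ a| ≤ B)
    (hw : ContinuousOn w (Ici c)) (hw0 : ∀ a ∈ Ici c, 0 ≤ w a) (hg : ContinuousOn g (Ici c))
    (hy : ∀ a ∈ Ici c, HasDerivWithinAt y (y' a) (Ici c) a) (hy' : ContinuousOn y' (Ici c))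
    {T ε : ℝ} (hT : c ≤ T) (hε : 0 < ε) :
    ∫ a in c..T, w a * |y a| ≤
      (B * (|y T| + |y c|) + B * (∫ a in c..T, |y' a|) + ∫ a in c..T, |g a| * |y a|) +
        ε * (2 * B + ∫ a in c..T, |g a|) := by
  have ii {f : ℝ → ℝ} (hf : ContinuousOn f (Ici c)) : IntervalIntegrable f volume c T :=
    hf.intervalIntegrable_of_Ici le_rfl hT
  have hB : 0 ≤ B := (abs_nonneg _).trans (hΨB c self_mem_Ici)
  have hyc : ContinuousOn y (Ici c) := fun a ha => (hy a ha).continuousWithinAt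
  have hΨc : ContinuousOn Ψ (Ici c) := fun a ha => (hΨ a ha).continuousWithinAt
  set v : ℝ → ℝ := fun a => √(y a ^ 2 + ε ^ 2)
  set v' : ℝ → ℝ := fun a => y a * y' a / v a
  have hv : ∀ a ∈ Ici c, HasDerivWithinAt v (v' a) (Ici c) a :=
    fun a ha => (hy a ha).sqrt_sq_add_sq hε.ne'
  have hvc : ContinuousOn v (Ici c) := fun a ha => (hv a ha).continuousWithinAt
  have hv'c : ContinuousOn v' (Ici c) :=
    (hyc.mul hy').div hvc fun a _ => (sqrt_pos.2 (by positivity)).ne'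
  have hv_le : ∀ a, v a ≤ |y a| + ε := fun a => sqrt_sq_add_sq_le_abs_add (y a) hε.le
  have hboundary : ∀ a ∈ Ici c, |Ψ a * v a| ≤ B * (|y a| + ε) := fun a ha => by
    rw [abs_mul, abs_of_nonneg (sqrt_nonneg _)]
    exact mul_le_mul (hΨB a ha) (hv_le a) (sqrt_nonneg _) hB
  have hintegrand : ∀ a ∈ Icc c T,
      g a * v a - Ψ a * v' a ≤ |g a| * |y a| + |g a| * ε + B * |y' a| := fun a ha => by
    have hgv : g a * v a ≤ |g a| * (|y a| + ε) := (le_abs_self _).trans (by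
      rw [abs_mul, abs_of_nonneg (sqrt_nonneg _)]
      exact mul_le_mul_of_nonneg_left (hv_le a) (abs_nonneg _))
    have hΨv' : -(Ψ a * v' a) ≤ B * |y' a| := (neg_le_abs _).trans (by
      rw [abs_mul]
      exact mul_le_mul (hΨB a ha.1) (abs_mul_div_sqrt_sq_add_sq_le _ _ _) (abs_nonneg _) hB)
    linarith
  have hgy : IntervalIntegrable (fun a => |g a| * |y a|) volume c T := ii (hg.abs.mul hyc.abs)
  have hgε : IntervalIntegrable (fun a => |g a| * ε) volume c T :=
    ii (hg.abs.mul continuousOn_const)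
  have hBy' : IntervalIntegrable (fun a => B * |y' a|) volume c T :=
    ii (continuousOn_const.mul hy'.abs)
  calc ∫ a in c..T, w a * |y a|
      ≤ ∫ a in c..T, w a * v a :=
        intervalIntegral.integral_mono_on hT (ii (hw.mul hyc.abs)) (ii (hw.mul hvc))
          fun a ha => mul_le_mul_of_nonneg_left (abs_le_sqrt_sq_add_sq _ _) (hw0 a ha.1)
    _ = Ψ T * v T - Ψ c * v c + ∫ a in c..T, (g a * v a - Ψ a * v' a) :=
        intervalIntegral_mul_eq_of_hasDerivWithinAt hΨ hw hg hv hv'c hT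
    _ ≤ B * (|y T| + ε) + B * (|y c| + ε) +
          ∫ a in c..T, (|g a| * |y a| + |g a| * ε + B * |y' a|) := by
        gcongr ?_ + ?_
        · linarith [le_abs_self (Ψ T * v T), neg_abs_le (Ψ c * v c),
            hboundary T hT, hboundary c self_mem_Ici]
        · exact intervalIntegral.integral_mono_on hT (ii ((hg.mul hvc).sub (hΨc.mul hv'c)))
            ((hgy.add hgε).add hBy') hintegrand
    _ = _ := by
        rw [intervalIntegral.integral_add (hgy.add hgε) hBy', intervalIntegral.integral_add hgy hgε,
          intervalIntegral.integral_mul_const, intervalIntegral.integral_const_mul]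
        ring

lemma intervalIntegral_mul_abs_le
    (hΨ : ∀ a ∈ Ici c, HasDerivWithinAt Ψ (w a - g a) (Ici c) a) (hΨB : ∀ a ∈ Ici c, |Ψ a| ≤ B)
    (hw : ContinuousOn w (Ici c)) (hw0 : ∀ a ∈ Ici c, 0 ≤ w a) (hg : ContinuousOn g (Ici c))
    (hy : ∀ a ∈ Ici c, HasDerivWithinAt y (y' a) (Ici c) a) (hy' : ContinuousOn y' (Ici c))
    {T : ℝ} (hT : c ≤ T) :
    ∫ a in c..T, w a * |y a| ≤
      B * (|y T| + |y c|) + B * (∫ a in c..T, |y' a|) + ∫ a in c..T, |g a| * |y a| :=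
  le_of_forall_pos_le_add_mul fun _ hε =>
    intervalIntegral_mul_abs_le_add_mul hΨ hΨB hw hw0 hg hy hy' hT hε

lemma intervalIntegral_le_integral_Ioi {f : ℝ → ℝ} (hf : IntegrableOn f (Ioi c))
    (hf0 : ∀ a ∈ Ioi c, 0 ≤ f a) {T : ℝ} (hT : c ≤ T) : ∫ a in c..T, f a ≤ ∫ a in Ioi c, f a := by
  rw [intervalIntegral.integral_of_le hT]
  exact setIntegral_mono_set hf ((ae_restrict_iff' measurableSet_Ioi).2 (ae_of_all _ hf0))
    Ioc_subset_Ioi_self.eventuallyLE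

lemma tendsto_atTop_zero_of_hasDerivWithinAt_Ici
    (hy : ∀ a ∈ Ici c, HasDerivWithinAt y (y' a) (Ici c) a)
    (hyint : IntegrableOn y (Ici c)) (hy'int : IntegrableOn y' (Ici c)) :
    Tendsto y atTop (𝓝 0) :=
  tendsto_zero_of_hasDerivAt_of_integrableOn_Ioi
    (fun a ha => (hy a (le_of_lt ha : c ≤ a)).hasDerivAt (Ici_mem_nhds ha))
    (hy'int.mono_set Ioi_subset_Ici_self) (hyint.mono_set Ioi_subset_Ici_self)

lemma integrableOn_mul_of_hasDerivWithinAt {G : ℝ}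
    (hΨ : ∀ a ∈ Ici c, HasDerivWithinAt Ψ (w a - g a) (Ici c) a) (hΨB : ∀ a ∈ Ici c, |Ψ a| ≤ B)
    (hw : ContinuousOn w (Ici c)) (hw0 : ∀ a ∈ Ici c, 0 ≤ w a)
    (hg : ContinuousOn g (Ici c)) (hgG : ∀ a ∈ Ici c, |g a| ≤ G)
    (hy : ∀ a ∈ Ici c, HasDerivWithinAt y (y' a) (Ici c) a) (hy' : ContinuousOn y' (Ici c))
    (hyint : IntegrableOn y (Ici c)) (hy'int : IntegrableOn y' (Ici c)) :
    IntegrableOn (fun a => w a * y a) (Ici c) := by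
  have hyc : ContinuousOn y (Ici c) := fun a ha => (hy a ha).continuousWithinAt
  rw [integrableOn_Ici_iff_integrableOn_Ioi]
  refine integrableOn_Ioi_of_intervalIntegral_norm_bounded
    (B * (1 + |y c|) + B * (∫ a in Ioi c, |y' a|) + G * ∫ a in Ioi c, |y a|) c
    (fun T => ((hw.mul hyc).mono Icc_subset_Ici_self).integrableOn_Icc.mono_set
      Ioc_subset_Icc_self) tendsto_id ?_
  have hy_small : ∀ᶠ T in atTop, |y T| ≤ 1 := by
    simpa using (tendsto_atTop_zero_of_hasDerivWithinAt_Ici hy hyint hy'int).abs.eventually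
      (ge_mem_nhds (by simp : |(0 : ℝ)| < 1))
  filter_upwards [hy_small, eventually_ge_atTop c] with T hyT hT
  have hnorm : ∫ a in c..T, ‖w a * y a‖ = ∫ a in c..T, w a * |y a| :=
    intervalIntegral.integral_congr fun a ha => by
      rw [norm_mul, norm_of_nonneg (hw0 a (uIcc_subset_Ici_of_le le_rfl hT ha)), norm_eq_abs]
  have hgy : ∫ a in c..T, |g a| * |y a| ≤ G * ∫ a in Ioi c, |y a| := by
    calc ∫ a in c..T, |g a| * |y a|
        ≤ ∫ a in c..T, G * |y a| :=
          intervalIntegral.integral_mono_on hT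
            ((hg.abs.mul hyc.abs).intervalIntegrable_of_Ici le_rfl hT)
            ((continuousOn_const.mul hyc.abs).intervalIntegrable_of_Ici le_rfl hT)
            fun a ha => mul_le_mul_of_nonneg_right (hgG a ha.1) (abs_nonneg _)
      _ ≤ G * ∫ a in Ioi c, |y a| := by
          rw [intervalIntegral.integral_const_mul]
          exact mul_le_mul_of_nonneg_left
            (intervalIntegral_le_integral_Ioi (hyint.mono_set Ioi_subset_Ici_self).abs
              (fun a _ => abs_nonneg _) hT) ((abs_nonneg _).trans (hgG c self_mem_Ici))
  have hy'T : ∫ a in c..T, |y' a| ≤ ∫ a in Ioi c, |y' a| :=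
    intervalIntegral_le_integral_Ioi (hy'int.mono_set Ioi_subset_Ici_self).abs
      (fun a _ => abs_nonneg _) hT
  have hB : 0 ≤ B := (abs_nonneg _).trans (hΨB c self_mem_Ici)
  rw [id, hnorm]
  refine (intervalIntegral_mul_abs_le hΨ hΨB hw hw0 hg hy hy' hT).trans ?_
  gcongr

theorem integral_Ici_mul_deriv_add_mul_eq {G : ℝ}
    (hΨ : ∀ a ∈ Ici c, HasDerivWithinAt Ψ (w a - g a) (Ici c) a) (hΨB : ∀ a ∈ Ici c, |Ψ a| ≤ B)
    (hw : ContinuousOn w (Ici c)) (hw0 : ∀ a ∈ Ici c, 0 ≤ w a)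
    (hg : ContinuousOn g (Ici c)) (hgG : ∀ a ∈ Ici c, |g a| ≤ G)
    (hy : ∀ a ∈ Ici c, HasDerivWithinAt y (y' a) (Ici c) a) (hy' : ContinuousOn y' (Ici c))
    (hyint : IntegrableOn y (Ici c)) (hy'int : IntegrableOn y' (Ici c)) :
    ∫ a in Ici c, (Ψ a * y' a + w a * y a) = (∫ a in Ici c, g a * y a) - Ψ c * y c := by
  have hΨc : ContinuousOn Ψ (Ici c) := fun a ha => (hΨ a ha).continuousWithinAt
  have bound_ae {f : ℝ → ℝ} {K : ℝ} (hf : ∀ a ∈ Ici c, |f a| ≤ K) :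
      ∀ᵐ a ∂volume.restrict (Ici c), ‖f a‖ ≤ K :=
    (ae_restrict_iff' measurableSet_Ici).2 (ae_of_all _ hf)
  have hwy := integrableOn_mul_of_hasDerivWithinAt hΨ hΨB hw hw0 hg hgG hy hy' hyint hy'int
  have hgy : IntegrableOn (fun a => g a * y a) (Ici c) :=
    hyint.bdd_mul (hg.aestronglyMeasurable measurableSet_Ici) (bound_ae hgG)
  have hΨy' : IntegrableOn (fun a => Ψ a * y' a) (Ici c) :=
    hy'int.bdd_mul (hΨc.aestronglyMeasurable measurableSet_Ici) (bound_ae hΨB)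
  have hlim : Tendsto (fun a => Ψ a * y a) atTop (𝓝 0) := by
    refine squeeze_zero_norm' ?_
      (by simpa using (tendsto_atTop_zero_of_hasDerivWithinAt_Ici hy hyint hy'int).abs.const_mul B)
    filter_upwards [eventually_ge_atTop c] with a ha
    rw [norm_mul, norm_eq_abs, norm_eq_abs]
    exact mul_le_mul_of_nonneg_right (hΨB a ha) (abs_nonneg _)
  have hderiv_int : IntegrableOn (fun a => (w a - g a) * y a + Ψ a * y' a) (Ici c) :=
    ((hwy.sub hgy).add hΨy').congr_fun
      (fun a _ => by simp only [Pi.add_apply, Pi.sub_apply]; ring) measurableSet_Ici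
  have hftc : ∫ a in Ioi c, ((w a - g a) * y a + Ψ a * y' a) = 0 - Ψ c * y c :=
    integral_Ioi_of_hasDerivAt_of_tendsto
      ((hΨ c self_mem_Ici).mul (hy c self_mem_Ici)).continuousWithinAt
      (fun a ha => ((hΨ a (le_of_lt ha : c ≤ a)).mul (hy a (le_of_lt ha : c ≤ a))).hasDerivAt
        (Ici_mem_nhds ha))
      (hderiv_int.mono_set Ioi_subset_Ici_self) hlim
  calc ∫ a in Ici c, (Ψ a * y' a + w a * y a)
      = ∫ a in Ici c, (((w a - g a) * y a + Ψ a * y' a) + g a * y a) := by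
        congr 1 with a
        ring
    _ = (∫ a in Ici c, g a * y a) - Ψ c * y c := by
        rw [integral_add hderiv_int hgy, integral_Ici_eq_integral_Ioi, hftc]
        ring

end WeightedIntegrationByParts

noncomputable def reproductiveValue (μ β : ℝ → ℝ) (a : ℝ) : ℝ :=
  ∫ s in Ici a, β s * exp (-∫ ξ in a..s, μ ξ)

section ReproductiveValue

variable {μ β : ℝ → ℝ} {c a : ℝ}

lemma reproductiveValue_nonneg (hβ : ∀ s ∈ Ici c, 0 ≤ β s) (ha : c ≤ a) :
    0 ≤ reproductiveValue μ β a :=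
  setIntegral_nonneg measurableSet_Ici fun s hs => mul_nonneg (hβ s (ha.trans hs)) (exp_pos _).le

lemma reproductiveValue_le {μ₀ M : ℝ} (hμ₀ : 0 < μ₀) (hμ : ContinuousOn μ (Ici c))
    (hμμ₀ : ∀ s ∈ Ici c, μ₀ ≤ μ s) (hβ : ∀ s ∈ Ici c, 0 ≤ β s) (hβM : ∀ s ∈ Ici c, β s ≤ M)
    (ha : c ≤ a) : reproductiveValue μ β a ≤ M / μ₀ := by
  have hM : 0 ≤ M := (hβ a ha).trans (hβM a ha)
  have hdecay : ∀ s ∈ Ici a, β s * exp (-∫ ξ in a..s, μ ξ) ≤ M * exp (μ₀ * a) * exp (-μ₀ * s) :=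
    fun s hs => by
      have hμint : μ₀ * (s - a) ≤ ∫ ξ in a..s, μ ξ := by
        simpa [mul_comm] using intervalIntegral.integral_mono_on hs intervalIntegrable_const
          (hμ.intervalIntegrable_of_Ici ha (ha.trans hs)) fun ξ hξ => hμμ₀ ξ (ha.trans hξ.1)
      rw [mul_assoc, ← exp_add]
      exact mul_le_mul (hβM s (ha.trans hs)) (exp_le_exp.2 (by linarith)) (exp_pos _).le hM
  calc reproductiveValue μ β a
      ≤ ∫ s in Ici a, M * exp (μ₀ * a) * exp (-μ₀ * s) := by
        refine integral_mono_of_nonneg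
          ((ae_restrict_iff' measurableSet_Ici).2 (ae_of_all _ fun s hs =>
            mul_nonneg (hβ s (ha.trans hs)) (exp_pos _).le))
          (((integrableOn_Ici_iff_integrableOn_Ioi).2
            (integrableOn_exp_mul_Ioi (neg_lt_zero.2 hμ₀) a)).const_mul _)
          ((ae_restrict_iff' measurableSet_Ici).2 (ae_of_all _ hdecay))
    _ = M / μ₀ := by
        rw [integral_const_mul, integral_Ici_eq_integral_Ioi,
          integral_exp_mul_Ioi (neg_lt_zero.2 hμ₀), mul_assoc, neg_mul, neg_div_neg_eq,
          mul_div_assoc', ← exp_add]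
        simp [div_eq_mul_inv]

lemma reproductiveValue_eq_exp_mul (hμ : ContinuousOn μ (Ici c))
    (hint : IntegrableOn (fun s => β s * exp (-∫ ξ in c..s, μ ξ)) (Ici c)) (ha : c ≤ a) :
    reproductiveValue μ β a = exp (∫ ξ in c..a, μ ξ) *
      (reproductiveValue μ β c - ∫ s in c..a, β s * exp (-∫ ξ in c..s, μ ξ)) := by
  rw [reproductiveValue, reproductiveValue, integral_Ici_eq_integral_Ioi,
    integral_Ici_eq_integral_Ioi,
    ← intervalIntegral.integral_Ioi_sub_Ioi (hint.mono_set Ioi_subset_Ici_self) ha,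
    sub_sub_cancel, ← integral_const_mul]
  refine setIntegral_congr_fun measurableSet_Ioi fun s hs => ?_
  rw [← intervalIntegral.integral_interval_sub_left
    (hμ.intervalIntegrable_of_Ici le_rfl (ha.trans (le_of_lt hs)))
    (hμ.intervalIntegrable_of_Ici le_rfl ha), neg_sub, sub_eq_add_neg, exp_add]
  ring

lemma hasDerivWithinAt_reproductiveValue (hμ : ContinuousOn μ (Ici c))
    (hβ : ContinuousOn β (Ici c))
    (hint : IntegrableOn (fun s => β s * exp (-∫ ξ in c..s, μ ξ)) (Ici c)) (ha : c ≤ a) :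
    HasDerivWithinAt (reproductiveValue μ β) (μ a * reproductiveValue μ β a - β a) (Ici c) a := by
  set A : ℝ → ℝ := fun u => ∫ ξ in c..u, μ ξ
  have hA : HasDerivWithinAt A (μ a) (Ici c) a := hμ.hasDerivWithinAt_integral_Ici ha
  have hAc : ContinuousOn A (Ici c) :=
    fun u hu => (hμ.hasDerivWithinAt_integral_Ici hu).continuousWithinAt
  have hrest : HasDerivWithinAt (fun u => reproductiveValue μ β c - ∫ s in c..u, β s * exp (-A s))
      (-(β a * exp (-A a))) (Ici c) a :=
    ((hβ.mul (hAc.neg.rexp)).hasDerivWithinAt_integral_Ici ha).const_sub _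
  have hprod := hA.exp.mul hrest
  refine (hprod.congr (fun u hu => reproductiveValue_eq_exp_mul hμ hint hu)
    (reproductiveValue_eq_exp_mul hμ hint ha)).congr_deriv ?_
  rw [reproductiveValue_eq_exp_mul hμ hint ha]
  have hcancel : exp (A a) * exp (-A a) = 1 := by rw [← exp_add, add_neg_cancel, exp_zero]
  linear_combination (-β a) * hcancel

end ReproductiveValue

/-- **Integration-by-parts identity for the Lyapunov weight `Ψ`.**
If `y` is continuously differentiable on `[0,∞)` with `y` and `y'` integrable,
then `∫_0^∞ Ψ(a)(y'(a) + μ(a) y(a)) da = (1/r) ∫_0^∞ β(a) y(a) da - y 0`. -/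
theorem weight_integration_by_parts (μ0 M : ℝ) (hμ0 : 0 < μ0)
    (μ β : ℝ → ℝ)
    (hμc : ContinuousOn μ (Ici 0)) (hμb : ∀ a, 0 ≤ a → μ0 ≤ μ a)
    (hβc : ContinuousOn β (Ici 0)) (hβnn : ∀ a, 0 ≤ a → 0 ≤ β a)
    (hβM : ∀ a, 0 ≤ a → β a ≤ M)
    (r : ℝ)
    (hr : r = ∫ a in Ici (0:ℝ), β a * Real.exp (-(∫ s in (0:ℝ)..a, μ s)))
    (hrpos : 0 < r)
    (Ψ : ℝ → ℝ)
    (hΨ : ∀ a, Ψ a = (1 / r) * ∫ s in Ici a, β s * Real.exp (-(∫ ξ in a..s, μ ξ)))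
    (y y' : ℝ → ℝ)
    (hy : ∀ a, 0 ≤ a → HasDerivWithinAt y (y' a) (Ici 0) a)
    (hy'c : ContinuousOn y' (Ici 0))
    (hyint : IntegrableOn y (Ici 0)) (hy'int : IntegrableOn y' (Ici 0)) :
    ∫ a in Ici (0:ℝ), Ψ a * (y' a + μ a * y a) =
      (1 / r) * (∫ a in Ici (0:ℝ), β a * y a) - y 0 := by
  -- a non-integrable integrand would give `r = 0`
  have hint : IntegrableOn (fun s => β s * exp (-∫ ξ in (0:ℝ)..s, μ ξ)) (Ici 0) :=
    Integrable.of_integral_ne_zero (hr ▸ hrpos.ne')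
  have hΨ_eq : Ψ = fun a => (1 / r) * reproductiveValue μ β a := funext hΨ
  have hΨ0 : Ψ 0 = 1 := by rw [hΨ 0, ← hr, one_div, inv_mul_cancel₀ hrpos.ne']
  have hΨ' : ∀ a ∈ Ici 0, HasDerivWithinAt Ψ (μ a * Ψ a - β a / r) (Ici 0) a := fun a ha => by
    rw [hΨ_eq]
    exact ((hasDerivWithinAt_reproductiveValue hμc hβc hint ha).const_mul (1 / r)).congr_deriv
      (by ring)
  have hΨ_nonneg : ∀ a ∈ Ici 0, 0 ≤ Ψ a := fun a ha => by
    rw [hΨ_eq]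
    exact mul_nonneg (by positivity) (reproductiveValue_nonneg hβnn ha)
  have hΨB : ∀ a ∈ Ici 0, |Ψ a| ≤ 1 / r * (M / μ0) := fun a ha => by
    rw [abs_of_nonneg (hΨ_nonneg a ha), hΨ_eq]
    exact mul_le_mul_of_nonneg_left (reproductiveValue_le hμ0 hμc hμb hβnn hβM ha) (by positivity)
  have hβr : ∀ a ∈ Ici 0, |β a / r| ≤ M / r := fun a ha => by
    rw [abs_div, abs_of_nonneg (hβnn a ha), abs_of_pos hrpos]
    exact div_le_div_of_nonneg_right (hβM a ha) hrpos.le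
  have hparts := integral_Ici_mul_deriv_add_mul_eq hΨ' hΨB
    (hμc.mul fun a ha => (hΨ' a ha).continuousWithinAt)
    (fun a ha => mul_nonneg (hμ0.le.trans (hμb a ha)) (hΨ_nonneg a ha))
    (hβc.div_const r) hβr hy hy'c hyint hy'int
  calc ∫ a in Ici (0:ℝ), Ψ a * (y' a + μ a * y a)
      = ∫ a in Ici (0:ℝ), (Ψ a * y' a + μ a * Ψ a * y a) := by
        congr 1 with a
        ring
    _ = (1 / r) * (∫ a in Ici (0:ℝ), β a * y a) - y 0 := by
        rw [hparts, hΨ0, one_mul, ← integral_const_mul]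
        congr 2 with a
        ring
end

section
/- Assume the two-strain SI model hypotheses with β_x, β_y additionally continuous. Let S : [0,∞) → (0,∞) be continuously differentiable and x, y : [0,∞)×[0,∞) → [0,∞) be continuously differentiable and satisfy, for all t ≥ 0 and a ≥ 0: ∂_t x(t,a) + ∂_a x(t,a) = −μ_x(a)x(t,a), ∂_t y(t,a) + ∂_a y(t,a) = −μ_y(a)y(t,a), x(t,0) = S(t)·∫_0^∞ β_x(a)x(t,a) da, y(t,0) = S(t)·∫_0^∞ β_y(a)y(t,a) da, and S'(t) = Λ − μ_S S(t) − S(t)·∫_0^∞ β_x(a)x(t,a) da − S(t)·∫_0^∞ β_y(a)y(t,a) da. Assume further that for each t the functions a ↦ x(t,a), ∂_a x(t,a), y(t,a), ∂_a y(t,a) are integrable on [0,∞), and that d/dt ∫_0^∞ Ψ_x(a)x(t,a) da = ∫_0^∞ Ψ_x(a)∂_t x(t,a) da and d/dt ∫_0^∞ Ψ_y(a)y(t,a) da = ∫_0^∞ Ψ_y(a)∂_t y(t,a) da. Define L_0(t) = S_0*·g(S(t)/S_0*) + ∫_0^∞ Ψ_x(a)x(t,a) da + ∫_0^∞ Ψ_y(a)y(t,a)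 da, where S_0* = Λ/μ_S. Then for every t ≥ 0: L_0'(t) = −(Λ − μ_S S(t))²/(μ_S S(t)) + ((R_0^x − 1)/r_x)·∫_0^∞ β_x(a)x(t,a) da + ((R_0^y − 1)/r_y)·∫_0^∞ β_y(a)y(t,a) da. In particular, if max{R_0^x, R_0^y} ≤ 1, then L_0'(t) ≤ 0 for all t ≥ 0. -/
/-!
Write `W(a) = ∫_a^∞ β(s) exp(-∫_a^s μ) ds`, so that `Ψ = W / r` and `W(0) = r`. Then
`W' = μ W - β` and `0 ≤ W ≤ M / μ₀`. Along the transport equation `∂ₜx = -∂ₐx - μ x`, hence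
`W ∂ₜx = -∂ₐ(W x) - β x`, and since `W x` is integrable on `[0, ∞)` the derivative `∂ₐ(W x)`
integrates to `-W(0) x(t, 0)`. So `d/dt ∫ Ψ x = x(t, 0) - (1/r) ∫ β x`, and substituting the
boundary condition and the equation for `S` into `L₀'` cancels the `S ∫ β x` terms, leaving the
stated expression.
-/

open MeasureTheory Real Set Filter

noncomputable def g (u : ℝ) : ℝ := u - Real.log u - 1

theorem frequently_lt_of_integrableOn_Ici {h : ℝ → ℝ} {b c : ℝ} (hc : 0 < c)
    (hint : IntegrableOn h (Ici b)) : ∃ᶠ x in atTop, h x < c := by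
  intro hge
  obtain ⟨T, hT⟩ := eventually_atTop.mp (hge.and (eventually_ge_atTop b))
  have hconst : IntegrableOn (fun _ => c) (Ici T) := by
    refine Integrable.mono' (hint.mono_set (Ici_subset_Ici.mpr (hT T le_rfl).2)).norm
      aestronglyMeasurable_const ?_
    filter_upwards [ae_restrict_mem measurableSet_Ici] with x hx
    rw [norm_of_nonneg hc.le]
    exact (not_lt.mp (hT x hx).1).trans (le_abs_self _)
  simp [integrableOn_const_iff, hc.ne'] at hconst

theorem integral_eq_sub_of_hasDerivWithinAt_Ici {h h' : ℝ → ℝ} {b T : ℝ}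
    (hd : ∀ a ∈ Ici b, HasDerivWithinAt h (h' a) (Ici b) a) (hT : b ≤ T)
    (h'int : IntegrableOn h' (Icc b T)) :
    ∫ a in b..T, h' a = h T - h b :=
  intervalIntegral.integral_eq_sub_of_hasDeriv_right_of_le hT
    (fun a ha => (hd a ha.1).continuousWithinAt.mono Icc_subset_Ici_self)
    (fun a ha => (hd a ha.1.le).mono (Ioi_subset_Ici_self.trans (Ici_subset_Ici.mpr ha.1.le)))
    ((intervalIntegrable_iff_integrableOn_Icc_of_le hT).mpr h'int)

/-- `h' + G ≥ 0` has primitive `h + ∫ G`, and along the times where `h < 1`, which exist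
arbitrarily late, this primitive is bounded. -/
theorem integrableOn_Ici_deriv_of_ge {h h' G : ℝ → ℝ} {b : ℝ}
    (hd : ∀ a ∈ Ici b, HasDerivWithinAt h (h' a) (Ici b) a)
    (h'loc : ∀ T, IntegrableOn h' (Icc b T))
    (hint : IntegrableOn h (Ici b)) (hG : IntegrableOn G (Ici b))
    (hle : ∀ a ∈ Ici b, -G a ≤ h' a) :
    IntegrableOn h' (Ici b) := by
  have hφ : ∀ a ∈ Ici b, 0 ≤ h' a + G a := fun a ha => by linarith [hle a ha]
  have hφint : ∀ T, b ≤ T → IntervalIntegrable (fun a => h' a + G a) volume b T := fun T hT =>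
    (intervalIntegrable_iff_integrableOn_Icc_of_le hT).mpr
      ((h'loc T).add (hG.mono_set Icc_subset_Ici_self))
  have hG_le : ∀ T, b ≤ T → ∫ a in b..T, G a ≤ ∫ a in Ici b, ‖G a‖ := fun T hT => by
    have hsub : Ioc b T ⊆ Ici b := Ioc_subset_Ioi_self.trans Ioi_subset_Ici_self
    rw [intervalIntegral.integral_of_le hT]
    exact (integral_mono (hG.mono_set hsub) (hG.mono_set hsub).norm fun a => le_norm_self _).trans
      (setIntegral_mono_set hG.norm (ae_of_all _ fun _ => norm_nonneg _) hsub.eventuallyLE)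
  have hbound : ∀ T, b ≤ T → ∫ a in b..T, ‖h' a + G a‖ ≤ 1 - h b + ∫ a in Ici b, ‖G a‖ := by
    intro T hT
    obtain ⟨T', hTT', hT'⟩ :=
      (frequently_lt_of_integrableOn_Ici one_pos hint).forall_exists_of_atTop T
    have hbT' : b ≤ T' := hT.trans hTT'
    calc ∫ a in b..T, ‖h' a + G a‖ = ∫ a in b..T, (h' a + G a) :=
          intervalIntegral.integral_congr fun a ha =>
            norm_of_nonneg (hφ a (by rw [uIcc_of_le hT] at ha; exact ha.1))
      _ ≤ ∫ a in b..T', (h' a + G a) :=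
          intervalIntegral.integral_mono_interval le_rfl hT hTT'
            ((ae_restrict_mem measurableSet_Ioc).mono fun a ha => hφ a ha.1.le) (hφint T' hbT')
      _ = h T' - h b + ∫ a in b..T', G a := by
          rw [intervalIntegral.integral_add
            ((intervalIntegrable_iff_integrableOn_Icc_of_le hbT').mpr (h'loc T'))
            ((intervalIntegrable_iff_integrableOn_Icc_of_le hbT').mpr
              (hG.mono_set Icc_subset_Ici_self)),
            integral_eq_sub_of_hasDerivWithinAt_Ici hd hbT' (h'loc T')]
      _ ≤ 1 - h b + ∫ a in Ici b, ‖G a‖ := by linarith [hG_le T' hbT']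
  have hφIoi : IntegrableOn (fun a => h' a + G a) (Ioi b) :=
    integrableOn_Ioi_of_intervalIntegral_norm_bounded _ b
      (fun T => (hφint (max b T) (le_max_left _ _)).1.mono_set
        (Ioc_subset_Ioc_right (le_max_right _ _))) tendsto_id
      ((eventually_ge_atTop b).mono hbound)
  rw [integrableOn_Ici_iff_integrableOn_Ioi]
  refine (hφIoi.sub (hG.mono_set Ioi_subset_Ici_self)).congr_fun (fun a _ => ?_)
    measurableSet_Ioi
  simp

theorem integral_Ici_deriv_eq_neg_of_ge {h h' G : ℝ → ℝ} {b : ℝ}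
    (hd : ∀ a ∈ Ici b, HasDerivWithinAt h (h' a) (Ici b) a)
    (h'loc : ∀ T, IntegrableOn h' (Icc b T))
    (hint : IntegrableOn h (Ici b)) (hG : IntegrableOn G (Ici b))
    (hle : ∀ a ∈ Ici b, -G a ≤ h' a) :
    ∫ a in Ici b, h' a = -h b := by
  have h'int :=
    (integrableOn_Ici_deriv_of_ge hd h'loc hint hG hle).mono_set Ioi_subset_Ici_self
  have hderiv : ∀ a ∈ Ioi b, HasDerivAt h (h' a) a := fun a ha =>
    (hd a (Ioi_subset_Ici_self ha)).hasDerivAt (Ici_mem_nhds ha)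
  have hlim := tendsto_zero_of_hasDerivAt_of_integrableOn_Ioi hderiv h'int
    (hint.mono_set Ioi_subset_Ici_self)
  rw [integral_Ici_eq_integral_Ioi, integral_Ioi_of_hasDerivAt_of_tendsto
    (hd b self_mem_Ici).continuousWithinAt hderiv h'int hlim, zero_sub]

/-- `r Ψ(a)` in the paper's notation: the expected infectivity still to come from an individual
infected `a` time units ago. -/
noncomputable def residualInfectivity (μ β : ℝ → ℝ) (a : ℝ) : ℝ :=
  ∫ s in Ici a, β s * exp (-(∫ ξ in a..s, μ ξ))

theorem residualInfectivity_congr {μ ν β : ℝ → ℝ} (h : EqOn μ ν (Ici 0)) {a : ℝ}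
    (ha : 0 ≤ a) :
    residualInfectivity μ β a = residualInfectivity ν β a :=
  setIntegral_congr_fun measurableSet_Ici fun s hs => by
    rw [intervalIntegral.integral_congr fun ξ hξ =>
      h (ha.trans (by rw [uIcc_of_le hs] at hξ; exact hξ.1))]

section ResidualInfectivity

variable {μ β : ℝ → ℝ} {μ0 M : ℝ}

theorem mul_sub_le_integral_of_le (hμc : Continuous μ) (hμ : ∀ ξ, μ0 ≤ μ ξ) {a s : ℝ}
    (has : a ≤ s) : μ0 * (s - a) ≤ ∫ ξ in a..s, μ ξ := by
  have := intervalIntegral.integral_mono_on has intervalIntegrable_const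
    (hμc.intervalIntegrable (μ := volume) a s) fun ξ _ => hμ ξ
  rwa [intervalIntegral.integral_const, smul_eq_mul, mul_comm] at this

theorem mul_exp_neg_integral_le (hμc : Continuous μ) (hμ : ∀ ξ, μ0 ≤ μ ξ)
    (hβ0 : ∀ s, 0 ≤ β s) (hβM : ∀ s, β s ≤ M) {a s : ℝ} (has : a ≤ s) :
    β s * exp (-(∫ ξ in a..s, μ ξ)) ≤ M * exp (μ0 * a) * exp (-μ0 * s) := by
  have hexp : exp (-(∫ ξ in a..s, μ ξ)) ≤ exp (μ0 * a) * exp (-μ0 * s) := by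
    rw [← exp_add, exp_le_exp]
    linarith [mul_sub_le_integral_of_le hμc hμ has]
  rw [mul_assoc]
  exact mul_le_mul (hβM s) hexp (exp_pos _).le ((hβ0 s).trans (hβM s))

theorem integrableOn_mul_exp_neg_integral (hμc : Continuous μ) (hμ0 : 0 < μ0)
    (hμ : ∀ ξ, μ0 ≤ μ ξ) (hβc : Continuous β) (hβ0 : ∀ s, 0 ≤ β s) (hβM : ∀ s, β s ≤ M)
    (a : ℝ) : IntegrableOn (fun s => β s * exp (-(∫ ξ in a..s, μ ξ))) (Ici a) := by
  have hbound : IntegrableOn (fun s => M * exp (μ0 * a) * exp (-μ0 * s)) (Ici a) :=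
    ((integrableOn_Ici_iff_integrableOn_Ioi).mpr (exp_neg_integrableOn_Ioi a hμ0)).const_mul _
  refine hbound.mono' ?_ ?_
  · have hI := intervalIntegral.continuous_primitive
      (fun _ _ => hμc.intervalIntegrable (μ := volume) _ _) a
    exact (hβc.mul (continuous_exp.comp hI.neg)).aestronglyMeasurable
  · filter_upwards [ae_restrict_mem measurableSet_Ici] with s hs
    rw [norm_of_nonneg (mul_nonneg (hβ0 s) (exp_pos _).le)]
    exact mul_exp_neg_integral_le hμc hμ hβ0 hβM hs

theorem residualInfectivity_nonneg (hβ0 : ∀ s, 0 ≤ β s) (a : ℝ) :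
    0 ≤ residualInfectivity μ β a :=
  setIntegral_nonneg measurableSet_Ici fun s _ => mul_nonneg (hβ0 s) (exp_pos _).le

theorem residualInfectivity_le (hμc : Continuous μ) (hμ0 : 0 < μ0) (hμ : ∀ ξ, μ0 ≤ μ ξ)
    (hβc : Continuous β) (hβ0 : ∀ s, 0 ≤ β s) (hβM : ∀ s, β s ≤ M) (a : ℝ) :
    residualInfectivity μ β a ≤ M / μ0 := by
  have hexp := (integrableOn_Ici_iff_integrableOn_Ioi).mpr (exp_neg_integrableOn_Ioi a hμ0)
  calc residualInfectivity μ β a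
      ≤ ∫ s in Ici a, M * exp (μ0 * a) * exp (-μ0 * s) :=
        setIntegral_mono_on (integrableOn_mul_exp_neg_integral hμc hμ0 hμ hβc hβ0 hβM a)
          (hexp.const_mul _) measurableSet_Ici
          fun s hs => mul_exp_neg_integral_le hμc hμ hβ0 hβM hs
    _ = M / μ0 := by
        rw [integral_const_mul, integral_Ici_eq_integral_Ioi,
          integral_exp_mul_Ioi (neg_lt_zero.mpr hμ0), neg_div_neg_eq,
          mul_assoc, ← mul_div_assoc, ← exp_add]
        simp [div_eq_mul_inv]

theorem residualInfectivity_eq_exp_mul (hμc : Continuous μ) (hμ0 : 0 < μ0)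
    (hμ : ∀ ξ, μ0 ≤ μ ξ) (hβc : Continuous β) (hβ0 : ∀ s, 0 ≤ β s) (hβM : ∀ s, β s ≤ M)
    {a : ℝ} (ha : 0 ≤ a) :
    residualInfectivity μ β a = exp (∫ ξ in 0..a, μ ξ) *
      (residualInfectivity μ β 0 - ∫ s in 0..a, β s * exp (-(∫ ξ in 0..s, μ ξ))) := by
  have hw := integrableOn_mul_exp_neg_integral hμc hμ0 hμ hβc hβ0 hβM 0
  have htail : ∫ s in Ici a, β s * exp (-(∫ ξ in 0..s, μ ξ)) =
      residualInfectivity μ β 0 - ∫ s in 0..a, β s * exp (-(∫ ξ in 0..s, μ ξ)) := by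
    rw [residualInfectivity, ← intervalIntegral.integral_Ici_sub_Ici' hw
      (hw.mono_set (Ici_subset_Ici.mpr ha)), sub_sub_cancel]
  rw [← htail, ← integral_const_mul, residualInfectivity]
  refine setIntegral_congr_fun measurableSet_Ici fun s _ => ?_
  rw [← intervalIntegral.integral_interval_sub_left (hμc.intervalIntegrable 0 s)
    (hμc.intervalIntegrable 0 a), neg_sub, sub_eq_add_neg, exp_add]
  ring

theorem hasDerivWithinAt_residualInfectivity (hμc : Continuous μ) (hμ0 : 0 < μ0)
    (hμ : ∀ ξ, μ0 ≤ μ ξ) (hβc : Continuous β) (hβ0 : ∀ s, 0 ≤ β s) (hβM : ∀ s, β s ≤ M)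
    {a : ℝ} (ha : 0 ≤ a) :
    HasDerivWithinAt (residualInfectivity μ β) (μ a * residualInfectivity μ β a - β a)
      (Ici 0) a := by
  have hIc :=
    intervalIntegral.continuous_primitive (fun _ _ => hμc.intervalIntegrable (μ := volume) _ _) 0
  have hI : HasDerivAt (fun a => ∫ ξ in 0..a, μ ξ) (μ a) a :=
    (hμc.integral_hasStrictDerivAt 0 a).hasDerivAt
  have hw : HasDerivAt (fun a => ∫ s in 0..a, β s * exp (-(∫ ξ in 0..s, μ ξ)))
      (β a * exp (-(∫ ξ in 0..a, μ ξ))) a :=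
    ((hβc.mul (continuous_exp.comp hIc.neg)).integral_hasStrictDerivAt 0 a).hasDerivAt
  have hrep := fun {b : ℝ} (hb : 0 ≤ b) =>
    residualInfectivity_eq_exp_mul hμc hμ0 hμ hβc hβ0 hβM hb
  refine ((hI.exp.mul (hw.const_sub _)).hasDerivWithinAt.congr (fun b hb => hrep hb)
    (hrep ha)).congr_deriv ?_
  rw [hrep ha, exp_neg]
  field_simp
  ring

theorem continuousOn_residualInfectivity (hμc : Continuous μ) (hμ0 : 0 < μ0)
    (hμ : ∀ ξ, μ0 ≤ μ ξ) (hβc : Continuous β) (hβ0 : ∀ s, 0 ≤ β s) (hβM : ∀ s, β s ≤ M) :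
    ContinuousOn (residualInfectivity μ β) (Ici 0) := fun _ ha =>
  (hasDerivWithinAt_residualInfectivity hμc hμ0 hμ hβc hβ0 hβM ha).continuousWithinAt

theorem integrableOn_residualInfectivity_mul (hμc : Continuous μ) (hμ0 : 0 < μ0)
    (hμ : ∀ ξ, μ0 ≤ μ ξ) (hβc : Continuous β) (hβ0 : ∀ s, 0 ≤ β s) (hβM : ∀ s, β s ≤ M)
    {f : ℝ → ℝ} (hf : IntegrableOn f (Ici 0)) :
    IntegrableOn (fun a => residualInfectivity μ β a * f a) (Ici 0) :=
  hf.bdd_mul ((continuousOn_residualInfectivity hμc hμ0 hμ hβc hβ0 hβM).aestronglyMeasurable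
    measurableSet_Ici) (c := M / μ0) (ae_of_all _ fun a => by
      rw [norm_of_nonneg (residualInfectivity_nonneg hβ0 a)]
      exact residualInfectivity_le hμc hμ0 hμ hβc hβ0 hβM a)

/-- As `μ` may be unbounded, `(W f)'` is not known to be integrable beforehand, only to be
bounded below by an integrable function. -/
theorem integral_residualInfectivity_mul_of_transport {f fa ft : ℝ → ℝ}
    (hμc : Continuous μ) (hμ0 : 0 < μ0) (hμ : ∀ ξ, μ0 ≤ μ ξ) (hβc : Continuous β)
    (hβ0 : ∀ s, 0 ≤ β s) (hβM : ∀ s, β s ≤ M)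
    (hf : IntegrableOn f (Ici 0)) (hfa : IntegrableOn fa (Ici 0)) (hf0 : ∀ a ∈ Ici 0, 0 ≤ f a)
    (hfd : ∀ a ∈ Ici 0, HasDerivWithinAt f (fa a) (Ici 0) a)
    (hft : ∀ a ∈ Ici 0, ft a + fa a = -μ a * f a) :
    ∫ a in Ici 0, residualInfectivity μ β a * ft a =
      residualInfectivity μ β 0 * f 0 - ∫ a in Ici 0, β a * f a := by
  set W := residualInfectivity μ β
  have hWc : ∀ T, ContinuousOn W (Icc 0 T) := fun _ =>
    (continuousOn_residualInfectivity hμc hμ0 hμ hβc hβ0 hβM).mono Icc_subset_Ici_self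
  have hβf : IntegrableOn (fun a => β a * f a) (Ici 0) :=
    hf.bdd_mul hβc.aestronglyMeasurable (c := M) (ae_of_all _ fun a => by
      rw [norm_of_nonneg (hβ0 a)]
      exact hβM a)
  have hWfa := integrableOn_residualInfectivity_mul hμc hμ0 hμ hβc hβ0 hβM hfa
  have hWf := integrableOn_residualInfectivity_mul hμc hμ0 hμ hβc hβ0 hβM hf
  set h' := fun a => (μ a * W a - β a) * f a + W a * fa a
  have hd : ∀ a ∈ Ici 0, HasDerivWithinAt (fun a => W a * f a) (h' a) (Ici 0) a := fun a ha =>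
    (hasDerivWithinAt_residualInfectivity hμc hμ0 hμ hβc hβ0 hβM ha).mul (hfd a ha)
  have hloc : ∀ T, IntegrableOn h' (Icc 0 T) := fun T =>
    ((hf.mono_set Icc_subset_Ici_self).continuousOn_mul
      ((hμc.continuousOn.mul (hWc T)).sub hβc.continuousOn) isCompact_Icc).add
      ((hfa.mono_set Icc_subset_Ici_self).continuousOn_mul (hWc T) isCompact_Icc)
  have hle : ∀ a ∈ Ici 0, -(|β a * f a| + |W a * fa a|) ≤ h' a := fun a ha => by
    have : 0 ≤ μ a * W a * f a := mul_nonneg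
      (mul_nonneg (hμ0.le.trans (hμ a)) (residualInfectivity_nonneg hβ0 a)) (hf0 a ha)
    simp only [h', sub_mul]
    linarith [le_abs_self (β a * f a), neg_abs_le (W a * fa a)]
  have hG := hβf.abs.add hWfa.abs
  calc ∫ a in Ici 0, W a * ft a = ∫ a in Ici 0, (-h' a - β a * f a) :=
        setIntegral_congr_fun measurableSet_Ici fun a ha => by
          rw [show ft a = -μ a * f a - fa a by linarith [hft a ha]]
          ring
    _ = W 0 * f 0 - ∫ a in Ici 0, β a * f a := by
        rw [integral_sub (f := fun a => -h' a)
            (integrableOn_Ici_deriv_of_ge hd hloc hWf hG hle).neg hβf,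
          integral_neg, integral_Ici_deriv_eq_neg_of_ge hd hloc hWf hG hle, neg_neg]

end ResidualInfectivity

theorem integral_weight_mul_of_transport {μ β Ψ f fa ft : ℝ → ℝ} {μ0 M r : ℝ}
    (hμc : ContinuousOn μ (Ici 0)) (hμ0 : 0 < μ0) (hμ : ∀ a ∈ Ici 0, μ0 ≤ μ a)
    (hβc : Continuous β) (hβ0 : ∀ s, 0 ≤ β s) (hβM : ∀ s, β s ≤ M)
    (hr : r = ∫ a in Ici 0, β a * exp (-(∫ s in 0..a, μ s))) (hr0 : r ≠ 0)
    (hΨ : ∀ a, Ψ a = (1 / r) * ∫ s in Ici a, β s * exp (-(∫ ξ in a..s, μ ξ)))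
    (hf : IntegrableOn f (Ici 0)) (hfa : IntegrableOn fa (Ici 0)) (hf0 : ∀ a ∈ Ici 0, 0 ≤ f a)
    (hfd : ∀ a ∈ Ici 0, HasDerivWithinAt f (fa a) (Ici 0) a)
    (hft : ∀ a ∈ Ici 0, ft a + fa a = -μ a * f a) :
    ∫ a in Ici 0, Ψ a * ft a = f 0 - (1 / r) * ∫ a in Ici 0, β a * f a := by
  -- a continuous extension of `μ` to `ℝ`, agreeing with `μ` wherever the integrals look
  set μ' := fun ξ => μ (max ξ 0)
  have hμμ' : EqOn μ' μ (Ici 0) := fun ξ hξ => by simp only [μ', max_eq_left (mem_Ici.mp hξ)]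
  have hμ'c : Continuous μ' :=
    hμc.comp_continuous (continuous_id.max continuous_const) fun ξ => le_max_right ξ 0
  have key := integral_residualInfectivity_mul_of_transport hμ'c hμ0
    (fun ξ => hμ _ (le_max_right ξ 0)) hβc hβ0 hβM hf hfa hf0 hfd
    fun a ha => by rw [hμμ' ha]; exact hft a ha
  rw [residualInfectivity_congr hμμ' le_rfl,
    show residualInfectivity μ β 0 = r from hr.symm] at key
  calc ∫ a in Ici 0, Ψ a * ft a
      = (1 / r) * ∫ a in Ici 0, residualInfectivity μ' β a * ft a := by
        rw [← integral_const_mul]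
        refine setIntegral_congr_fun measurableSet_Ici fun a ha => ?_
        rw [hΨ, residualInfectivity_congr hμμ' ha, residualInfectivity, mul_assoc]
    _ = f 0 - (1 / r) * ∫ a in Ici 0, β a * f a := by
        rw [key]
        field_simp

theorem HasDerivAt.const_mul_g_div_const {f : ℝ → ℝ} {f' c t : ℝ} (hf : HasDerivAt f f' t)
    (hc : c ≠ 0) (ht : f t ≠ 0) :
    HasDerivAt (fun τ => c * g (f τ / c)) ((1 - c / f t) * f') t := by
  have hu := hf.div_const c
  refine (((hu.sub (hu.log (div_ne_zero ht hc))).sub_const 1).const_mul c).congr_deriv ?_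
  field_simp

theorem lyapunov_derivative_L0_general
    (Λ μS μ0 : ℝ) (μx μy βx βy : ℝ → ℝ)
    (hΛ : 0 < Λ) (hμS : 0 < μS) (hμ0 : 0 < μ0)
    (hμxc : ContinuousOn μx (Ici 0)) (hμyc : ContinuousOn μy (Ici 0))
    (hμxb : ∀ a, 0 ≤ a → μ0 ≤ μx a) (hμyb : ∀ a, 0 ≤ a → μ0 ≤ μy a)
    (hβxc : Continuous βx) (hβyc : Continuous βy)
    (hβxnn : ∀ a, 0 ≤ βx a) (hβynn : ∀ a, 0 ≤ βy a)
    (Mx My : ℝ) (hβxM : ∀ a, βx a ≤ Mx) (hβyM : ∀ a, βy a ≤ My)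
    (rx ry : ℝ)
    (hrx : rx = ∫ a in Ici (0:ℝ), βx a * Real.exp (-(∫ s in (0:ℝ)..a, μx s)))
    (hry : ry = ∫ a in Ici (0:ℝ), βy a * Real.exp (-(∫ s in (0:ℝ)..a, μy s)))
    (hrxpos : 0 < rx) (hrypos : 0 < ry)
    (R0x R0y : ℝ) (hR0x : R0x = Λ * rx / μS) (hR0y : R0y = Λ * ry / μS)
    (Ψx Ψy : ℝ → ℝ)
    (hΨx : ∀ a, Ψx a = (1 / rx) * ∫ s in Ici a, βx s * Real.exp (-(∫ ξ in a..s, μx ξ)))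
    (hΨy : ∀ a, Ψy a = (1 / ry) * ∫ s in Ici a, βy s * Real.exp (-(∫ ξ in a..s, μy ξ)))
    (S : ℝ → ℝ) (hSpos : ∀ t, 0 ≤ t → 0 < S t)
    (x y xt xa yt ya : ℝ → ℝ → ℝ)
    (hxnn : ∀ t a, 0 ≤ t → 0 ≤ a → 0 ≤ x t a)
    (hynn : ∀ t a, 0 ≤ t → 0 ≤ a → 0 ≤ y t a)
    (hxa : ∀ t a, 0 ≤ t → 0 ≤ a → HasDerivWithinAt (fun α => x t α) (xa t a) (Ici 0) a)
    (hya : ∀ t a, 0 ≤ t → 0 ≤ a → HasDerivWithinAt (fun α => y t α) (ya t a) (Ici 0) a)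
    (hPDEx : ∀ t a, 0 ≤ t → 0 ≤ a → xt t a + xa t a = -(μx a) * x t a)
    (hPDEy : ∀ t a, 0 ≤ t → 0 ≤ a → yt t a + ya t a = -(μy a) * y t a)
    (hbcx : ∀ t, 0 ≤ t → x t 0 = S t * ∫ a in Ici (0:ℝ), βx a * x t a)
    (hbcy : ∀ t, 0 ≤ t → y t 0 = S t * ∫ a in Ici (0:ℝ), βy a * y t a)
    (hODE : ∀ t, 0 ≤ t → HasDerivAt S
      (Λ - μS * S t - S t * (∫ a in Ici (0:ℝ), βx a * x t a)
        - S t * (∫ a in Ici (0:ℝ), βy a * y t a)) t)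
    (hxint : ∀ t, 0 ≤ t → IntegrableOn (x t) (Ici 0))
    (hxaint : ∀ t, 0 ≤ t → IntegrableOn (xa t) (Ici 0))
    (hyint : ∀ t, 0 ≤ t → IntegrableOn (y t) (Ici 0))
    (hyaint : ∀ t, 0 ≤ t → IntegrableOn (ya t) (Ici 0))
    (hdiffx : ∀ t, 0 ≤ t → HasDerivAt (fun τ => ∫ a in Ici (0:ℝ), Ψx a * x τ a)
      (∫ a in Ici (0:ℝ), Ψx a * xt t a) t)
    (hdiffy : ∀ t, 0 ≤ t → HasDerivAt (fun τ => ∫ a in Ici (0:ℝ), Ψy a * y τ a)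
      (∫ a in Ici (0:ℝ), Ψy a * yt t a) t) :
    ∀ t, 0 ≤ t →
      HasDerivAt (fun τ => (Λ / μS) * g (S τ / (Λ / μS)) +
          (∫ a in Ici (0:ℝ), Ψx a * x τ a) + (∫ a in Ici (0:ℝ), Ψy a * y τ a))
        (-(Λ - μS * S t) ^ 2 / (μS * S t)
          + ((R0x - 1) / rx) * (∫ a in Ici (0:ℝ), βx a * x t a)
          + ((R0y - 1) / ry) * (∫ a in Ici (0:ℝ), βy a * y t a)) t
      ∧ (max R0x R0y ≤ 1 →
          -(Λ - μS * S t) ^ 2 / (μS * S t)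
          + ((R0x - 1) / rx) * (∫ a in Ici (0:ℝ), βx a * x t a)
          + ((R0y - 1) / ry) * (∫ a in Ici (0:ℝ), βy a * y t a) ≤ 0) := by
  intro t ht
  have hSt := hSpos t ht
  have HX := integral_weight_mul_of_transport hμxc hμ0 hμxb hβxc hβxnn hβxM hrx hrxpos.ne' hΨx
    (hxint t ht) (hxaint t ht) (hxnn t · ht) (hxa t · ht) (hPDEx t · ht)
  have HY := integral_weight_mul_of_transport hμyc hμ0 hμyb hβyc hβynn hβyM hry hrypos.ne' hΨy
    (hyint t ht) (hyaint t ht) (hynn t · ht) (hya t · ht) (hPDEy t · ht)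
  have hBx : 0 ≤ ∫ a in Ici (0:ℝ), βx a * x t a :=
    setIntegral_nonneg measurableSet_Ici fun a ha => mul_nonneg (hβxnn a) (hxnn t a ht ha)
  have hBy : 0 ≤ ∫ a in Ici (0:ℝ), βy a * y t a :=
    setIntegral_nonneg measurableSet_Ici fun a ha => mul_nonneg (hβynn a) (hynn t a ht ha)
  refine ⟨?_, fun hmax => ?_⟩
  · have hL := (((hODE t ht).const_mul_g_div_const (c := Λ / μS) (by positivity) hSt.ne').add
      (hdiffx t ht)).add (hdiffy t ht)
    rw [HX, HY, hbcx t ht, hbcy t ht] at hL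
    refine hL.congr_deriv ?_
    rw [hR0x, hR0y]
    field_simp
    ring
  · have hS : -(Λ - μS * S t) ^ 2 / (μS * S t) ≤ 0 :=
      div_nonpos_of_nonpos_of_nonneg (neg_nonpos.mpr (sq_nonneg _)) (by positivity)
    have hX := mul_nonpos_of_nonpos_of_nonneg
      (div_nonpos_of_nonpos_of_nonneg (by linarith [le_max_left R0x R0y] : R0x - 1 ≤ 0)
        hrxpos.le) hBx
    have hY := mul_nonpos_of_nonpos_of_nonneg
      (div_nonpos_of_nonpos_of_nonneg (by linarith [le_max_right R0x R0y] : R0y - 1 ≤ 0)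
        hrypos.le) hBy
    linarith

/-- **Derivative of the disease-free Lyapunov functional `L₀` along solutions
of the two-strain infection-age structured SI model (Proposition 5.3(1)).**
`L₀'(t) = -(Λ - μ_S S)²/(μ_S S) + ((R₀ˣ-1)/rₓ)∫βₓ x + ((R₀ʸ-1)/r_y)∫β_y y`;
in particular `L₀' ≤ 0` when `max{R₀ˣ, R₀ʸ} ≤ 1`. -/
theorem lyapunov_derivative_L0
    (Λ μS μ0 : ℝ) (μx μy βx βy : ℝ → ℝ)
    (hΛ : 0 < Λ) (hμS : 0 < μS) (hμ0 : 0 < μ0) (hμSμ0 : μ0 ≤ μS)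
    (hμxc : ContinuousOn μx (Ici 0)) (hμyc : ContinuousOn μy (Ici 0))
    (hμxb : ∀ a, 0 ≤ a → μ0 ≤ μx a) (hμyb : ∀ a, 0 ≤ a → μ0 ≤ μy a)
    (hβxc : Continuous βx) (hβyc : Continuous βy)
    (hβxnn : ∀ a, 0 ≤ βx a) (hβynn : ∀ a, 0 ≤ βy a)
    (Mx My : ℝ) (hβxM : ∀ a, βx a ≤ Mx) (hβyM : ∀ a, βy a ≤ My)
    (rx ry : ℝ)
    (hrx : rx = ∫ a in Ici (0:ℝ), βx a * Real.exp (-(∫ s in (0:ℝ)..a, μx s)))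
    (hry : ry = ∫ a in Ici (0:ℝ), βy a * Real.exp (-(∫ s in (0:ℝ)..a, μy s)))
    (hrxpos : 0 < rx) (hrypos : 0 < ry)
    (R0x R0y : ℝ) (hR0x : R0x = Λ * rx / μS) (hR0y : R0y = Λ * ry / μS)
    (Ψx Ψy : ℝ → ℝ)
    (hΨx : ∀ a, Ψx a = (1 / rx) * ∫ s in Ici a, βx s * Real.exp (-(∫ ξ in a..s, μx ξ)))
    (hΨy : ∀ a, Ψy a = (1 / ry) * ∫ s in Ici a, βy s * Real.exp (-(∫ ξ in a..s, μy ξ)))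
    (S : ℝ → ℝ) (hSpos : ∀ t, 0 ≤ t → 0 < S t)
    (x y xt xa yt ya : ℝ → ℝ → ℝ)
    (hxnn : ∀ t a, 0 ≤ t → 0 ≤ a → 0 ≤ x t a)
    (hynn : ∀ t a, 0 ≤ t → 0 ≤ a → 0 ≤ y t a)
    (hxt : ∀ t a, 0 ≤ t → 0 ≤ a → HasDerivAt (fun τ => x τ a) (xt t a) t)
    (hxa : ∀ t a, 0 ≤ t → 0 ≤ a → HasDerivWithinAt (fun α => x t α) (xa t a) (Ici 0) a)
    (hyt : ∀ t a, 0 ≤ t → 0 ≤ a → HasDerivAt (fun τ => y τ a) (yt t a) t)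
    (hya : ∀ t a, 0 ≤ t → 0 ≤ a → HasDerivWithinAt (fun α => y t α) (ya t a) (Ici 0) a)
    (hPDEx : ∀ t a, 0 ≤ t → 0 ≤ a → xt t a + xa t a = -(μx a) * x t a)
    (hPDEy : ∀ t a, 0 ≤ t → 0 ≤ a → yt t a + ya t a = -(μy a) * y t a)
    (hbcx : ∀ t, 0 ≤ t → x t 0 = S t * ∫ a in Ici (0:ℝ), βx a * x t a)
    (hbcy : ∀ t, 0 ≤ t → y t 0 = S t * ∫ a in Ici (0:ℝ), βy a * y t a)
    (hODE : ∀ t, 0 ≤ t → HasDerivAt S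
      (Λ - μS * S t - S t * (∫ a in Ici (0:ℝ), βx a * x t a)
        - S t * (∫ a in Ici (0:ℝ), βy a * y t a)) t)
    (hxint : ∀ t, 0 ≤ t → IntegrableOn (x t) (Ici 0))
    (hxaint : ∀ t, 0 ≤ t → IntegrableOn (xa t) (Ici 0))
    (hyint : ∀ t, 0 ≤ t → IntegrableOn (y t) (Ici 0))
    (hyaint : ∀ t, 0 ≤ t → IntegrableOn (ya t) (Ici 0))
    (hdiffx : ∀ t, 0 ≤ t → HasDerivAt (fun τ => ∫ a in Ici (0:ℝ), Ψx a * x τ a)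
      (∫ a in Ici (0:ℝ), Ψx a * xt t a) t)
    (hdiffy : ∀ t, 0 ≤ t → HasDerivAt (fun τ => ∫ a in Ici (0:ℝ), Ψy a * y τ a)
      (∫ a in Ici (0:ℝ), Ψy a * yt t a) t) :
    ∀ t, 0 ≤ t →
      HasDerivAt (fun τ => (Λ / μS) * g (S τ / (Λ / μS)) +
          (∫ a in Ici (0:ℝ), Ψx a * x τ a) + (∫ a in Ici (0:ℝ), Ψy a * y τ a))
        (-(Λ - μS * S t) ^ 2 / (μS * S t)
          + ((R0x - 1) / rx) * (∫ a in Ici (0:ℝ), βx a * x t a)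
          + ((R0y - 1) / ry) * (∫ a in Ici (0:ℝ), βy a * y t a)) t
      ∧ (max R0x R0y ≤ 1 →
          -(Λ - μS * S t) ^ 2 / (μS * S t)
          + ((R0x - 1) / rx) * (∫ a in Ici (0:ℝ), βx a * x t a)
          + ((R0y - 1) / ry) * (∫ a in Ici (0:ℝ), βy a * y t a) ≤ 0) :=
  lyapunov_derivative_L0_general Λ μS μ0 μx μy βx βy hΛ hμS hμ0 hμxc hμyc hμxb hμyb hβxc hβyc hβxnn
    hβynn Mx My hβxM hβyM rx ry hrx hry hrxpos hrypos R0x R0y hR0x hR0y Ψx Ψy hΨx hΨy S hSpos x y xt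
    xa yt ya hxnn hynn hxa hya hPDEx hPDEy hbcx hbcy hODE hxint hxaint hyint hyaint hdiffx hdiffy
end

section
/- Let S_0* > 0, let Ψ_x, Ψ_y : [0,∞) → [0,∞) be bounded measurable, let g(u) = u − ln u − 1 for u > 0, and define L_0(S, x, y) = S_0*·g(S/S_0*) + ∫_0^∞ Ψ_x(a)x(a) da + ∫_0^∞ Ψ_y(a)y(a) da for S > 0 and integrable x, y : [0,∞) → [0,∞). Assume there exist c_Ψ > 0 and Ψ̲ > 0 such that Ψ_x(a) ≥ Ψ̲ and Ψ_y(a) ≥ Ψ̲ for all a ∈ [0, c_Ψ]. Then for every ε > 0 there exists η > 0 such that whenever S > 0, x, y : [0,∞) → [0,∞) are integrable and L_0(S, x, y) ≤ η, one has |S − S_0*| ≤ ε, ∫_0^{c_Ψ} x(a) da ≤ ε and ∫_0^{c_Ψ} y(a) da ≤ ε. -/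
open MeasureTheory Real Set

lemma g_nonneg {u : ℝ} (hu : 0 < u) : 0 ≤ g u := by
  have := Real.log_le_sub_one_of_pos hu
  simp only [g]
  linarith

lemma log_sub_log_lt {u v : ℝ} (hu : 0 < u) (hv : 0 < v) (huv : u ≠ v) :
    Real.log u - Real.log v < (u - v) / v := by
  rw [← Real.log_div hu.ne' hv.ne', sub_div, div_self hv.ne']
  exact Real.log_lt_sub_one_of_pos (div_pos hu hv) (div_ne_one_of_ne huv)

lemma g_strictMonoOn : StrictMonoOn g (Ici 1) := by
  intro u (hu : 1 ≤ u) v _ huv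
  have hlog := log_sub_log_lt (by linarith) (by linarith) huv.ne'
  have hdiv : (v - u) / u ≤ v - u := div_le_self (sub_nonneg.2 huv.le) hu
  simp only [g]
  linarith

lemma g_strictAntiOn : StrictAntiOn g (Ioc 0 1) := by
  intro u ⟨hu, _⟩ v ⟨hv, hv1⟩ huv
  have hlog := log_sub_log_lt hu hv huv.ne
  have hdiv : v - u ≤ (v - u) / v := le_div_self (sub_nonneg.2 huv.le) hv hv1
  rw [← neg_sub v u, neg_div] at hlog
  simp only [g]
  linarith

lemma exists_pos_abs_sub_one_le_of_g_le {δ : ℝ} (hδ : 0 < δ) :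
    ∃ κ > 0, ∀ u > 0, g u ≤ κ → |u - 1| ≤ δ := by
  -- capped so that `1 - δ'` stays in `(0, 1)`, where `g` is decreasing
  set δ' := min δ (1 / 2)
  have hδ' : 0 < δ' := lt_min hδ one_half_pos
  have hδ'_lt : δ' < 1 := (min_le_right _ _).trans_lt one_half_lt_one
  have hg1 : g 1 = 0 := by simp [g]
  have hlow : 0 < g (1 - δ') :=
    hg1 ▸ g_strictAntiOn ⟨by linarith, by linarith⟩ ⟨one_pos, le_rfl⟩ (by linarith)
  have hhigh : 0 < g (1 + δ') :=
    hg1 ▸ g_strictMonoOn (mem_Ici.2 le_rfl) (mem_Ici.2 (by linarith)) (by linarith)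
  refine ⟨min (g (1 - δ')) (g (1 + δ')), lt_min hlow hhigh, fun u hu hgu => ?_⟩
  refine (abs_sub_le_iff.2 ⟨?_, ?_⟩).trans (min_le_left δ (1 / 2))
  · by_contra! h
    have := g_strictMonoOn (mem_Ici.2 (by linarith)) (mem_Ici.2 (by linarith))
      (show 1 + δ' < u by linarith)
    linarith [min_le_right (g (1 - δ')) (g (1 + δ'))]
  · by_contra! h
    have := g_strictAntiOn ⟨hu, by linarith⟩ ⟨by linarith, by linarith⟩ (by linarith : u < 1 - δ')
    linarith [min_le_left (g (1 - δ')) (g (1 + δ'))]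

lemma mul_intervalIntegral_le_setIntegral_Ici_mul {Ψ x : ℝ → ℝ} {M c m : ℝ}
    (hΨ : Measurable Ψ) (hΨ_nonneg : ∀ a, 0 ≤ Ψ a) (hΨ_le : ∀ a, Ψ a ≤ M)
    (hc : 0 ≤ c) (hm : ∀ a ∈ Icc 0 c, m ≤ Ψ a)
    (hx : IntegrableOn x (Ici 0)) (hx_nonneg : ∀ a, 0 ≤ a → 0 ≤ x a) :
    m * ∫ a in (0:ℝ)..c, x a ≤ ∫ a in Ici (0:ℝ), Ψ a * x a := by
  have hΨx : IntegrableOn (fun a => Ψ a * x a) (Ici 0) :=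
    hx.bdd_mul hΨ.aestronglyMeasurable
      (Filter.Eventually.of_forall fun a => (Real.norm_of_nonneg (hΨ_nonneg a)).trans_le (hΨ_le a))
  have hsub : Ioc 0 c ⊆ Ici (0:ℝ) := fun a ha => ha.1.le
  calc m * ∫ a in (0:ℝ)..c, x a = ∫ a in Ioc 0 c, m * x a := by
        rw [intervalIntegral.integral_of_le hc, integral_const_mul]
    _ ≤ ∫ a in Ioc 0 c, Ψ a * x a :=
        setIntegral_mono_on ((hx.mono_set hsub).const_mul m) (hΨx.mono_set hsub) measurableSet_Ioc
          fun a ha => mul_le_mul_of_nonneg_right (hm a (Ioc_subset_Icc_self ha)) (hx_nonneg a ha.1.le)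
    _ ≤ ∫ a in Ici 0, Ψ a * x a :=
        setIntegral_mono_set hΨx
          ((ae_restrict_iff' measurableSet_Ici).2 (Filter.Eventually.of_forall fun a ha =>
            mul_nonneg (hΨ_nonneg a) (hx_nonneg a ha)))
          hsub.eventuallyLE

/-- **Small sublevel sets of the Lyapunov functional `L₀` force closeness to
the disease-free equilibrium** (in the `S`-component and in infected mass on
the age window `[0, c_Ψ]` where the weights are bounded below). -/
theorem sublevel_subset_ball (S0 : ℝ) (hS0 : 0 < S0)
    (Ψx Ψy : ℝ → ℝ) (hΨxm : Measurable Ψx) (hΨym : Measurable Ψy)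
    (hΨxnn : ∀ a, 0 ≤ Ψx a) (hΨynn : ∀ a, 0 ≤ Ψy a)
    (Mx My : ℝ) (hMx : ∀ a, Ψx a ≤ Mx) (hMy : ∀ a, Ψy a ≤ My)
    (cΨ Ψlow : ℝ) (hcΨ : 0 < cΨ) (hΨlow : 0 < Ψlow)
    (hlowx : ∀ a ∈ Icc (0:ℝ) cΨ, Ψlow ≤ Ψx a)
    (hlowy : ∀ a ∈ Icc (0:ℝ) cΨ, Ψlow ≤ Ψy a) :
    ∀ ε > 0, ∃ η > 0, ∀ (S : ℝ) (x y : ℝ → ℝ),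
      0 < S → IntegrableOn x (Ici 0) → IntegrableOn y (Ici 0) →
      (∀ a, 0 ≤ a → 0 ≤ x a) → (∀ a, 0 ≤ a → 0 ≤ y a) →
      S0 * g (S / S0) + (∫ a in Ici (0:ℝ), Ψx a * x a) +
        (∫ a in Ici (0:ℝ), Ψy a * y a) ≤ η →
      |S - S0| ≤ ε ∧ (∫ a in (0:ℝ)..cΨ, x a) ≤ ε ∧ (∫ a in (0:ℝ)..cΨ, y a) ≤ ε := by
  intro ε hε
  obtain ⟨κ, hκ, hclose⟩ := exists_pos_abs_sub_one_le_of_g_le (div_pos hε hS0)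
  refine ⟨min (S0 * κ) (Ψlow * ε), lt_min (mul_pos hS0 hκ) (mul_pos hΨlow hε),
    fun S x y hS hx hy hx_nonneg hy_nonneg hL => ?_⟩
  have hgS := mul_nonneg hS0.le (g_nonneg (div_pos hS hS0))
  have hIx := mul_intervalIntegral_le_setIntegral_Ici_mul hΨxm hΨxnn hMx hcΨ.le hlowx hx hx_nonneg
  have hIy := mul_intervalIntegral_le_setIntegral_Ici_mul hΨym hΨynn hMy hcΨ.le hlowy hy hy_nonneg
  have hx0 : 0 ≤ Ψlow * ∫ a in (0:ℝ)..cΨ, x a :=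
    mul_nonneg hΨlow.le (intervalIntegral.integral_nonneg hcΨ.le fun a ha => hx_nonneg a ha.1)
  have hy0 : 0 ≤ Ψlow * ∫ a in (0:ℝ)..cΨ, y a :=
    mul_nonneg hΨlow.le (intervalIntegral.integral_nonneg hcΨ.le fun a ha => hy_nonneg a ha.1)
  have hη₁ := min_le_left (S0 * κ) (Ψlow * ε)
  have hη₂ := min_le_right (S0 * κ) (Ψlow * ε)
  refine ⟨?_, le_of_mul_le_mul_left (by linarith) hΨlow, le_of_mul_le_mul_left (by linarith) hΨlow⟩
  have hu := hclose (S / S0) (div_pos hS hS0) (le_of_mul_le_mul_left (by linarith) hS0)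
  rwa [div_sub_one hS0.ne', abs_div, abs_of_pos hS0, div_le_div_iff_of_pos_right hS0] at hu
end
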